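/- arXiv:2004.04094 — 4 statements merged into one kernel-verified Lean document; each statement's English description precedes it below -/
import Mathlib

section
/- For all real numbers m > 0, N > -1, 0 ≤ d ≤ m, there exists a constant C > 0 (depending only on m, N) such that for all a ≥ 0, ∫₀^∞ exp(-r^{2m}/2 + a·r^d)·r^N dr ≤ C·(1+a)^{max(0, (N+1)/m - 1)}·exp(a²/2). -/
open MeasureTheory Real Set

lemma gauss_integrable (a : ℝ) :
    Integrable (fun s : ℝ => Real.exp (-(2:ℝ)⁻¹ * (s - a) ^ 2)) :=
  (integrable_exp_neg_mul_sq (by norm_num : (0:ℝ) < 2⁻¹)).comp_sub_right a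

lemma gauss_setIntegral_le (a : ℝ) :
    (∫ s in Ioi (0:ℝ), Real.exp (-(2:ℝ)⁻¹ * (s - a) ^ 2)) ≤ Real.sqrt (2 * π) := by
  have h1 : (∫ s in Ioi (0:ℝ), Real.exp (-(2:ℝ)⁻¹ * (s - a) ^ 2)) ≤
      ∫ s : ℝ, Real.exp (-(2:ℝ)⁻¹ * (s - a) ^ 2) :=
    setIntegral_le_integral (gauss_integrable a)
      (Filter.Eventually.of_forall fun x => (Real.exp_pos _).le)
  have h2 : (∫ s : ℝ, Real.exp (-(2:ℝ)⁻¹ * (s - a) ^ 2)) = Real.sqrt (2 * π) := by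
    rw [integral_sub_right_eq_self (fun s => Real.exp (-(2:ℝ)⁻¹ * s ^ 2)) a,
      integral_gaussian]
    norm_num [mul_comm]
  linarith

lemma ind_integrableOn {t : ℝ} (ht : -1 < t) :
    IntegrableOn (Set.indicator (Ioc (0:ℝ) 1) (fun s => s ^ t)) (Ioi (0:ℝ)) :=
  (IntegrableOn.integrable_indicator
    (intervalIntegral.intervalIntegrable_rpow' ht).1 measurableSet_Ioc).integrableOn

lemma ind_setIntegral {t : ℝ} (ht : -1 < t) :
    (∫ s in Ioi (0:ℝ), Set.indicator (Ioc (0:ℝ) 1) (fun s => s ^ t) s) = 1 / (t + 1) := by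
  rw [setIntegral_indicator measurableSet_Ioc]
  have h : Ioi (0:ℝ) ∩ Ioc 0 1 = Ioc 0 1 := by
    rw [inter_eq_right]; exact Ioc_subset_Ioi_self
  rw [h, ← intervalIntegral.integral_of_le zero_le_one, integral_rpow (Or.inl ht),
    Real.zero_rpow (by linarith), Real.one_rpow]
  ring

set_option maxHeartbeats 1000000 in
/-- Lemma on the integral `I(a) = ∫₀^∞ exp(-r^{2m}/2 + a r^d) r^N dr`:
for all `m > 0`, `N > -1`, there is `C > 0` (depending only on `m, N`) such that for all
`0 ≤ d ≤ m` and `a ≥ 0`,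
`I(a) ≤ C (1+a)^{max(0,(N+1)/m - 1)} exp(a²/2)`. -/
theorem integral_exp_rpow_bound (m N : ℝ) (hm : 0 < m) (hN : -1 < N) :
    ∃ C > 0, ∀ d a : ℝ, 0 ≤ d → d ≤ m → 0 ≤ a →
      (∫ r in Set.Ioi (0 : ℝ), Real.exp (-r ^ (2 * m) / 2 + a * r ^ d) * r ^ N) ≤
        C * (1 + a) ^ (max 0 ((N + 1) / m - 1)) * Real.exp (a ^ 2 / 2) := by
  set p := (N + 1) / m - 1 with hp_def
  set q := max (0:ℝ) p with hq_def
  have hN1 : 0 < N + 1 := by linarith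
  have hp1 : -1 < p := by
    have : 0 < (N + 1) / m := div_pos hN1 hm
    rw [hp_def]; linarith
  have hq0 : 0 ≤ q := le_max_left _ _
  have hpq : p ≤ q := le_max_right _ _
  set K := ∫ s in Ioi (0:ℝ), s ^ q * Real.exp (-(8:ℝ)⁻¹ * s ^ 2) with hK_def
  have hKint : IntegrableOn (fun s : ℝ => s ^ q * Real.exp (-(8:ℝ)⁻¹ * s ^ 2)) (Ioi 0) :=
    integrableOn_rpow_mul_exp_neg_mul_sq (by norm_num) (by linarith)
  have hK0 : 0 ≤ K := setIntegral_nonneg measurableSet_Ioi fun s hs =>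
    mul_nonneg (Real.rpow_nonneg (le_of_lt hs) _) (Real.exp_pos _).le
  set B := 1 / (p + 1) + 2 ^ q * Real.sqrt (2 * π) + K with hB_def
  have hB0 : 0 < B := by
    have h1 : 0 < 1 / (p + 1) := by
      apply one_div_pos.2; linarith
    rw [hB_def]
    have h2 : (0:ℝ) ≤ 2 ^ q * Real.sqrt (2 * π) := by positivity
    linarith
  refine ⟨Real.exp 2⁻¹ / (N + 1) + B / m,
    add_pos (div_pos (Real.exp_pos _) hN1) (div_pos hB0 hm), ?_⟩
  intro d a hd hdm ha
  have h1a : (0:ℝ) < 1 + a := by linarith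
  have h1a1 : (1:ℝ) ≤ (1 + a) ^ q := Real.one_le_rpow (by linarith) hq0
  set Φ : ℝ → ℝ := fun s => Set.indicator (Ioc (0:ℝ) 1) (fun s => s ^ p) s
      + (2 * (1 + a)) ^ q * Real.exp (-(2:ℝ)⁻¹ * (s - a) ^ 2)
      + s ^ q * Real.exp (-(8:ℝ)⁻¹ * s ^ 2) with hΦ_def
  have hΦnn : ∀ s : ℝ, 0 < s → 0 ≤ Φ s := by
    intro s hs
    have h1 : 0 ≤ Set.indicator (Ioc (0:ℝ) 1) (fun s => s ^ p) s :=
      Set.indicator_nonneg (fun x hx => Real.rpow_nonneg (le_of_lt hx.1) p) s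
    have h2 : (0:ℝ) ≤ (2 * (1 + a)) ^ q * Real.exp (-(2:ℝ)⁻¹ * (s - a) ^ 2) := by positivity
    have h3 : (0:ℝ) ≤ s ^ q * Real.exp (-(8:ℝ)⁻¹ * s ^ 2) := by positivity
    simp only [hΦ_def]
    linarith
  have hgint : Integrable (fun s : ℝ =>
      (2 * (1 + a)) ^ q * Real.exp (-(2:ℝ)⁻¹ * (s - a) ^ 2)) ((volume : Measure ℝ).restrict (Ioi 0)) :=
    (((gauss_integrable a).const_mul _).integrableOn)
  have hΦint : IntegrableOn Φ (Ioi (0:ℝ)) :=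
    ((ind_integrableOn hp1).add hgint).add hKint
  have hΦval : (∫ s in Ioi (0:ℝ), Φ s) ≤ B * (1 + a) ^ q := by
    have hsplit : (∫ s in Ioi (0:ℝ), Φ s)
        = (∫ s in Ioi (0:ℝ), Set.indicator (Ioc (0:ℝ) 1) (fun s => s ^ p) s)
          + (∫ s in Ioi (0:ℝ), (2 * (1 + a)) ^ q * Real.exp (-(2:ℝ)⁻¹ * (s - a) ^ 2)) + K := by
      have h12 : Integrable (fun s : ℝ => Set.indicator (Ioc (0:ℝ) 1) (fun s => s ^ p) s
          + (2 * (1 + a)) ^ q * Real.exp (-(2:ℝ)⁻¹ * (s - a) ^ 2))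
          ((volume : Measure ℝ).restrict (Ioi 0)) := (ind_integrableOn hp1).add hgint
      have h1' : Integrable (Set.indicator (Ioc (0:ℝ) 1) (fun s : ℝ => s ^ p))
          ((volume : Measure ℝ).restrict (Ioi 0)) := ind_integrableOn hp1
      simp only [hΦ_def]
      rw [integral_add h12 hKint, integral_add h1' hgint, hK_def]
    have e1 := ind_setIntegral hp1
    have e2 : (∫ s in Ioi (0:ℝ), (2 * (1 + a)) ^ q * Real.exp (-(2:ℝ)⁻¹ * (s - a) ^ 2))
        ≤ 2 ^ q * (1 + a) ^ q * Real.sqrt (2 * π) := by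
      rw [integral_const_mul]
      calc (2 * (1 + a)) ^ q * ∫ s in Ioi (0:ℝ), Real.exp (-(2:ℝ)⁻¹ * (s - a) ^ 2)
          ≤ (2 * (1 + a)) ^ q * Real.sqrt (2 * π) :=
            mul_le_mul_of_nonneg_left (gauss_setIntegral_le a) (Real.rpow_nonneg (by linarith) _)
        _ = 2 ^ q * (1 + a) ^ q * Real.sqrt (2 * π) := by
            rw [Real.mul_rpow (by norm_num) h1a.le]
    have c1 : (0:ℝ) ≤ 1 / (p + 1) := le_of_lt (one_div_pos.2 (by linarith))
    have c2 : (0:ℝ) ≤ 2 ^ q * Real.sqrt (2 * π) := by positivity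
    rw [hsplit, hB_def]
    nlinarith [mul_nonneg c1 (sub_nonneg.2 h1a1), mul_nonneg hK0 (sub_nonneg.2 h1a1),
      mul_nonneg c2 (sub_nonneg.2 h1a1)]
  have hkey : ∀ s : ℝ, 0 < s → Real.exp (-(2:ℝ)⁻¹ * (s - a) ^ 2) * s ^ p ≤ Φ s := by
    intro s hs
    have hexp1 : Real.exp (-(2:ℝ)⁻¹ * (s - a) ^ 2) ≤ 1 := by
      rw [Real.exp_le_one_iff]; nlinarith [sq_nonneg (s - a)]
    have hexp1' := (Real.exp_pos (-(2:ℝ)⁻¹ * (s - a) ^ 2)).le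
    have hsp := Real.rpow_nonneg hs.le p
    have hsq := Real.rpow_nonneg hs.le q
    rcases le_or_gt s 1 with hs1 | hs1
    · have hind : Set.indicator (Ioc (0:ℝ) 1) (fun s => s ^ p) s = s ^ p :=
        Set.indicator_of_mem (show s ∈ Ioc (0:ℝ) 1 from ⟨hs, hs1⟩) _
      have h2 : (0:ℝ) ≤ (2 * (1 + a)) ^ q * Real.exp (-(2:ℝ)⁻¹ * (s - a) ^ 2) := by positivity
      have h3 : (0:ℝ) ≤ s ^ q * Real.exp (-(8:ℝ)⁻¹ * s ^ 2) := by positivity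
      simp only [hΦ_def, hind]
      nlinarith
    · have hind : Set.indicator (Ioc (0:ℝ) 1) (fun s => s ^ p) s = 0 :=
        Set.indicator_of_notMem (fun h => absurd h.2 (not_le.2 hs1)) _
      have hspq : s ^ p ≤ s ^ q := Real.rpow_le_rpow_of_exponent_le hs1.le hpq
      simp only [hΦ_def, hind]
      rcases le_or_gt s (2 * a + 1) with hs2 | hs2
      · have h1 : s ^ q ≤ (2 * (1 + a)) ^ q :=
          Real.rpow_le_rpow hs.le (by linarith) hq0
        have h3 : (0:ℝ) ≤ s ^ q * Real.exp (-(8:ℝ)⁻¹ * s ^ 2) := by positivity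
        have hmain : Real.exp (-(2:ℝ)⁻¹ * (s - a) ^ 2) * s ^ p ≤
            (2 * (1 + a)) ^ q * Real.exp (-(2:ℝ)⁻¹ * (s - a) ^ 2) := by
          rw [mul_comm ((2 * (1 + a)) ^ q)]
          exact mul_le_mul_of_nonneg_left (hspq.trans h1) hexp1'
        linarith
      · have hexp2 : Real.exp (-(2:ℝ)⁻¹ * (s - a) ^ 2) ≤ Real.exp (-(8:ℝ)⁻¹ * s ^ 2) := by
          apply Real.exp_le_exp.2
          nlinarith [mul_pos (show (0:ℝ) < s - 2*a by linarith) (show (0:ℝ) < 3*s - 2*a by linarith)]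
        have h2 : (0:ℝ) ≤ (2 * (1 + a)) ^ q * Real.exp (-(2:ℝ)⁻¹ * (s - a) ^ 2) := by positivity
        have hmain : Real.exp (-(2:ℝ)⁻¹ * (s - a) ^ 2) * s ^ p ≤
            s ^ q * Real.exp (-(8:ℝ)⁻¹ * s ^ 2) := by
          rw [mul_comm (s ^ q)]
          exact mul_le_mul hexp2 hspq hsp (Real.exp_pos _).le
        linarith
  have hΨint : IntegrableOn (fun r : ℝ => (|m| * r ^ (m - 1)) • Φ (r ^ m)) (Ioi 0) :=
    (integrableOn_Ioi_comp_rpow_iff Φ hm.ne').2 hΦint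
  have hΨval : (∫ r in Ioi (0:ℝ), (|m| * r ^ (m - 1)) • Φ (r ^ m)) = ∫ s in Ioi (0:ℝ), Φ s :=
    integral_comp_rpow_Ioi Φ hm.ne'
  have hNind_int : Integrable (Set.indicator (Ioc (0:ℝ) 1) (fun r : ℝ => r ^ N))
      ((volume : Measure ℝ).restrict (Ioi 0)) := ind_integrableOn hN
  have habs : |m| = m := abs_of_pos hm
  have hDint : Integrable (fun r : ℝ => Real.exp (a ^ 2 / 2) *
      (Real.exp 2⁻¹ * Set.indicator (Ioc (0:ℝ) 1) (fun r => r ^ N) r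
        + m⁻¹ * ((|m| * r ^ (m - 1)) • Φ (r ^ m)))) ((volume : Measure ℝ).restrict (Ioi 0)) :=
    (((hNind_int.const_mul _).add (hΨint.const_mul _)).const_mul _)
  have hmono : (∫ r in Ioi (0:ℝ), Real.exp (-r ^ (2 * m) / 2 + a * r ^ d) * r ^ N)
      ≤ ∫ r in Ioi (0:ℝ), Real.exp (a ^ 2 / 2) *
      (Real.exp 2⁻¹ * Set.indicator (Ioc (0:ℝ) 1) (fun r => r ^ N) r
        + m⁻¹ * ((|m| * r ^ (m - 1)) • Φ (r ^ m))) := by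
    apply integral_mono_of_nonneg ?_ hDint ?_
    · filter_upwards [ae_restrict_mem measurableSet_Ioi] with r hr
      exact mul_nonneg (Real.exp_pos _).le (Real.rpow_nonneg (le_of_lt hr) _)
    · filter_upwards [ae_restrict_mem measurableSet_Ioi] with r hr
      have hr0 : (0:ℝ) < r := hr
      have hrm1 : (0:ℝ) ≤ r ^ (m - 1) := Real.rpow_nonneg hr0.le _
      have hsm : (0:ℝ) < r ^ m := Real.rpow_pos_of_pos hr0 m
      have hΦrm := hΦnn (r ^ m) hsm
      simp only [smul_eq_mul, habs]
      rcases le_or_gt r 1 with hr1 | hr1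
      · have hrd : r ^ d ≤ 1 := Real.rpow_le_one hr0.le hr1 hd
        have h2m : (0:ℝ) ≤ r ^ (2 * m) := Real.rpow_nonneg hr0.le _
        have hard : a * r ^ d ≤ a := by nlinarith
        have hexp : Real.exp (-r ^ (2 * m) / 2 + a * r ^ d) ≤ Real.exp (a ^ 2 / 2 + 2⁻¹) := by
          apply Real.exp_le_exp.2
          nlinarith [sq_nonneg (a - 1)]
        have hind : Set.indicator (Ioc (0:ℝ) 1) (fun r : ℝ => r ^ N) r = r ^ N :=
          Set.indicator_of_mem (show r ∈ Ioc (0:ℝ) 1 from ⟨hr0, hr1⟩) _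
        have hrN : (0:ℝ) ≤ r ^ N := Real.rpow_nonneg hr0.le N
        rw [hind, mul_add]
        have h1 : Real.exp (-r ^ (2 * m) / 2 + a * r ^ d) * r ^ N
            ≤ Real.exp (a ^ 2 / 2) * (Real.exp 2⁻¹ * r ^ N) := by
          rw [← mul_assoc, ← Real.exp_add]
          exact mul_le_mul_of_nonneg_right hexp hrN
        have h2 : (0:ℝ) ≤ Real.exp (a ^ 2 / 2) * (m⁻¹ * (m * r ^ (m - 1) * Φ (r ^ m))) :=
          mul_nonneg (Real.exp_pos _).le (mul_nonneg (inv_pos.2 hm).le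
            (mul_nonneg (mul_nonneg hm.le hrm1) hΦrm))
        linarith
      · have hind : Set.indicator (Ioc (0:ℝ) 1) (fun r : ℝ => r ^ N) r = 0 :=
          Set.indicator_of_notMem (fun h => absurd h.2 (not_le.2 hr1)) _
        rw [hind]
        have hrd : r ^ d ≤ r ^ m := Real.rpow_le_rpow_of_exponent_le hr1.le hdm
        have h2m : r ^ (2 * m) = (r ^ m) ^ 2 := by
          rw [mul_comm, Real.rpow_mul hr0.le, Real.rpow_two]
        have hrN : r ^ N = r ^ (m - 1) * (r ^ m) ^ p := by
          rw [← Real.rpow_mul hr0.le, ← Real.rpow_add hr0]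
          congr 1
          rw [hp_def]
          field_simp
          ring
        have key := hkey (r ^ m) hsm
        have e1 : Real.exp (-r ^ (2 * m) / 2 + a * r ^ d)
            ≤ Real.exp (a ^ 2 / 2) * Real.exp (-(2:ℝ)⁻¹ * (r ^ m - a) ^ 2) := by
          rw [← Real.exp_add]
          apply Real.exp_le_exp.2
          rw [h2m]
          nlinarith [mul_le_mul_of_nonneg_left hrd ha]
        have hrNn : (0:ℝ) ≤ r ^ N := Real.rpow_nonneg hr0.le N
        calc Real.exp (-r ^ (2 * m) / 2 + a * r ^ d) * r ^ N
            ≤ (Real.exp (a ^ 2 / 2) * Real.exp (-(2:ℝ)⁻¹ * (r ^ m - a) ^ 2)) * r ^ N :=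
              mul_le_mul_of_nonneg_right e1 hrNn
          _ = Real.exp (a ^ 2 / 2) * (r ^ (m - 1) *
                (Real.exp (-(2:ℝ)⁻¹ * (r ^ m - a) ^ 2) * (r ^ m) ^ p)) := by
              rw [hrN]; ring
          _ ≤ Real.exp (a ^ 2 / 2) * (r ^ (m - 1) * Φ (r ^ m)) :=
              mul_le_mul_of_nonneg_left (mul_le_mul_of_nonneg_left key hrm1) (Real.exp_pos _).le
          _ = Real.exp (a ^ 2 / 2) * (Real.exp 2⁻¹ * 0 + m⁻¹ * (m * r ^ (m - 1) * Φ (r ^ m))) := by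
              have hmm : m⁻¹ * (m * r ^ (m - 1) * Φ (r ^ m)) = r ^ (m - 1) * Φ (r ^ m) := by
                field_simp
              rw [mul_zero, zero_add, hmm]
  have hDval : (∫ r in Ioi (0:ℝ), Real.exp (a ^ 2 / 2) *
      (Real.exp 2⁻¹ * Set.indicator (Ioc (0:ℝ) 1) (fun r => r ^ N) r
        + m⁻¹ * ((|m| * r ^ (m - 1)) • Φ (r ^ m))))
      = Real.exp (a ^ 2 / 2) * (Real.exp 2⁻¹ * (1 / (N + 1))
        + m⁻¹ * ∫ s in Ioi (0:ℝ), Φ s) := by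
    rw [integral_const_mul, integral_add (hNind_int.const_mul _) (hΨint.const_mul _),
      integral_const_mul, integral_const_mul, ind_setIntegral hN, hΨval]
  refine le_trans (le_trans hmono (le_of_eq hDval)) ?_
  have hm' : (0:ℝ) ≤ m⁻¹ := (inv_pos.2 hm).le
  have hE := (Real.exp_pos (a ^ 2 / 2)).le
  have hc1 : (0:ℝ) ≤ Real.exp 2⁻¹ / (N + 1) := div_nonneg (Real.exp_pos _).le hN1.le
  have key : Real.exp 2⁻¹ * (1 / (N + 1)) + m⁻¹ * (∫ s in Ioi (0:ℝ), Φ s)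
      ≤ (Real.exp 2⁻¹ / (N + 1) + B / m) * (1 + a) ^ q := by
    have h2 : m⁻¹ * (∫ s in Ioi (0:ℝ), Φ s) ≤ m⁻¹ * (B * (1 + a) ^ q) :=
      mul_le_mul_of_nonneg_left hΦval hm'
    have h3 : Real.exp 2⁻¹ / (N + 1) ≤ Real.exp 2⁻¹ / (N + 1) * (1 + a) ^ q :=
      le_mul_of_one_le_right hc1 h1a1
    have e1 : Real.exp 2⁻¹ * (1 / (N + 1)) = Real.exp 2⁻¹ / (N + 1) := by ring
    have e2 : m⁻¹ * (B * (1 + a) ^ q) = (B / m) * (1 + a) ^ q := by ring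
    rw [add_mul]
    linarith
  calc Real.exp (a ^ 2 / 2) * (Real.exp 2⁻¹ * (1 / (N + 1)) + m⁻¹ * ∫ s in Ioi (0:ℝ), Φ s)
      ≤ Real.exp (a ^ 2 / 2) * ((Real.exp 2⁻¹ / (N + 1) + B / m) * (1 + a) ^ q) :=
        mul_le_mul_of_nonneg_left key hE
    _ = (Real.exp 2⁻¹ / (N + 1) + B / m) * (1 + a) ^ q * Real.exp (a ^ 2 / 2) := by ring
end

section
/- Let m ≥ 1 and let f be an entire function with ∫_ℂ |f(z)|²·exp(-|z|^{2m}) dA(z) < ∞, where dA is Lebesgue area measure. Then there exists a constant C > 0 such that |f(z)| ≤ C·(1+|z|)^{m-1}·exp(|z|^{2m}/2) for all z ∈ ℂ. -/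
set_option maxHeartbeats 1000000
open MeasureTheory Metric Set

lemma circle_mean_bound (g : ℂ → ℂ) (hg : Differentiable ℂ g) (c : ℂ) {s : ℝ} (hs : 0 < s) :
    2 * Real.pi * ‖g c‖ ≤
      ∫ θ in (0:ℝ)..(2*Real.pi), ‖g (circleMap c s θ)‖ := by
  have hc : (∮ z in C(c, s), (z - c)⁻¹ • g z) = (2 * Real.pi * Complex.I : ℂ) • g c :=
    DiffContOnCl.circleIntegral_sub_inv_smul
      (hg.differentiableOn.diffContOnCl) (mem_ball_self hs)
  have h2 : ‖∮ z in C(c, s), (z - c)⁻¹ • g z‖ = 2 * Real.pi * ‖g c‖ := by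
    rw [hc, norm_smul]
    simp [Complex.norm_I, abs_of_nonneg Real.pi_nonneg, Real.pi_nonneg,
      mul_comm, mul_assoc, Real.pi_pos.le]
  have h3 : ‖∮ z in C(c, s), (z - c)⁻¹ • g z‖ ≤
      ∫ θ in (0:ℝ)..(2*Real.pi), ‖g (circleMap c s θ)‖ := by
    rw [circleIntegral]
    refine (intervalIntegral.norm_integral_le_integral_norm
      (by positivity)).trans (le_of_eq ?_)
    refine intervalIntegral.integral_congr fun θ _ => ?_
    have hne : circleMap 0 s θ ≠ 0 := by
      simpa using circleMap_ne_center (c := 0) (θ := θ) hs.ne'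
    rw [deriv_circleMap, circleMap_sub_center]
    simp only [smul_eq_mul, norm_mul, Complex.norm_I, norm_inv,
      norm_circleMap_zero, mul_one, abs_of_pos hs]
    field_simp
  linarith [h2 ▸ h3]


lemma disc_mean_bound (g : ℂ → ℂ) (hg : Differentiable ℂ g) (c : ℂ) {r : ℝ} (hr : 0 < r) :
    Real.pi * r ^ 2 * ‖g c‖ ≤ ∫ w in closedBall c r, ‖g w‖ := by
  have hgc : Continuous fun w => ‖g w‖ := continuous_norm.comp hg.continuous
  set F : ℂ → ℝ := (closedBall c r).indicator (fun w => ‖g w‖) with hF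
  have hsymm : ∀ p : ℝ × ℝ, c + Complex.polarCoord.symm p = circleMap c p.1 p.2 := by
    intro p
    rw [Complex.polarCoord_symm_apply, circleMap, Complex.exp_mul_I]
    push_cast
    ring
  set S : Set (ℝ × ℝ) := Ioc (0:ℝ) r ×ˢ Ioo (-Real.pi) Real.pi with hS
  have hSmeas : MeasurableSet S := measurableSet_Ioc.prod measurableSet_Ioo
  -- continuity of the polar integrand
  have hcont : Continuous fun p : ℝ × ℝ => p.1 * ‖g (c + Complex.polarCoord.symm p)‖ := by
    have : Continuous fun p : ℝ × ℝ => c + Complex.polarCoord.symm p := by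
      simp only [Complex.polarCoord_symm_apply]
      fun_prop
    exact continuous_fst.mul (hgc.comp this)
  --整合性: the polar integrand is the indicator of S
  have hind : ∀ p ∈ polarCoord.target,
      p.1 • F (c + Complex.polarCoord.symm p)
        = S.indicator (fun p : ℝ × ℝ => p.1 * ‖g (c + Complex.polarCoord.symm p)‖) p := by
    intro p hp
    rcases hp with ⟨hp1, hp2⟩
    have habs : ‖Complex.polarCoord.symm p‖ = p.1 := by
      rw [Complex.norm_polarCoord_symm, abs_of_pos hp1]
    have hdist : dist (c + Complex.polarCoord.symm p) c = p.1 := by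
      rw [dist_eq_norm]; simpa using habs
    by_cases hle : p.1 ≤ r
    · have hpS : p ∈ S := ⟨⟨hp1, hle⟩, hp2⟩
      have hmem : c + Complex.polarCoord.symm p ∈ closedBall c r := by
        simp [mem_closedBall, hdist, hle, abs_of_pos (mem_Ioi.mp hp1)]
      rw [indicator_of_mem hpS, hF, indicator_of_mem hmem, smul_eq_mul]
    · have hpS : p ∉ S := fun h => hle h.1.2
      have hmem : c + Complex.polarCoord.symm p ∉ closedBall c r := by
        simp [mem_closedBall, hdist, hle, abs_of_pos (mem_Ioi.mp hp1)]
      rw [indicator_of_notMem hpS, hF, indicator_of_notMem hmem, smul_zero]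
  have hFint : Integrable F :=
    ((hgc.continuousOn).integrableOn_compact (isCompact_closedBall c r)).integrable_indicator
      measurableSet_closedBall
  have hsub : S ⊆ polarCoord.target := by
    rw [hS, polarCoord_target]
    exact Set.prod_mono Ioc_subset_Ioi_self subset_rfl
  have hGint : IntegrableOn
      (fun p : ℝ × ℝ => p.1 * ‖g (c + Complex.polarCoord.symm p)‖) S := by
    refine (hcont.continuousOn.integrableOn_compact (isCompact_Icc
      (a := ((0:ℝ), -Real.pi)) (b := (r, Real.pi)))).mono_set ?_
    rw [hS, Icc_prod_eq]
    exact Set.prod_mono Ioc_subset_Icc_self Ioo_subset_Icc_self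
  have e1 : ∫ w in closedBall c r, ‖g w‖ = ∫ w, F w :=
    (integral_indicator measurableSet_closedBall).symm
  have e2 : ∫ w, F w = ∫ w, F (c + w) := (integral_add_left_eq_self F c).symm
  have e3 : ∫ w, F (c + w) = ∫ p in polarCoord.target,
      p.1 • F (c + Complex.polarCoord.symm p) :=
    (Complex.integral_comp_polarCoord_symm fun w => F (c + w)).symm
  have e4 : ∫ p in polarCoord.target, p.1 • F (c + Complex.polarCoord.symm p)
      = ∫ p in S, p.1 * ‖g (c + Complex.polarCoord.symm p)‖ := by
    rw [setIntegral_congr_fun polarCoord.open_target.measurableSet hind,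
      setIntegral_indicator hSmeas, inter_eq_self_of_subset_right hsub]
  have e5 : ∫ p in S, p.1 * ‖g (c + Complex.polarCoord.symm p)‖
      = ∫ s in Ioc (0:ℝ) r, ∫ θ in Ioo (-Real.pi) Real.pi,
          s * ‖g (c + Complex.polarCoord.symm (s, θ))‖ := by
    rw [hS] at hGint ⊢
    rw [Measure.volume_eq_prod] at hGint ⊢
    exact setIntegral_prod _ hGint
  have hinner : ∀ s ∈ Ioc (0:ℝ) r,
      2 * Real.pi * ‖g c‖ * s ≤
        ∫ θ in Ioo (-Real.pi) Real.pi,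
          s * ‖g (c + Complex.polarCoord.symm (s, θ))‖ := by
    intro s hsmem
    have hs0 : 0 < s := hsmem.1
    have h1 : ∫ θ in Ioo (-Real.pi) Real.pi,
        s * ‖g (c + Complex.polarCoord.symm (s, θ))‖
        = s * ∫ θ in Ioo (-Real.pi) Real.pi, ‖g (circleMap c s θ)‖ := by
      simp_rw [hsymm]
      exact integral_const_mul s _
    have hper : Function.Periodic (fun θ => ‖g (circleMap c s θ)‖)
        (2 * Real.pi) := fun θ => by
      simp [periodic_circleMap c s θ]
    have h2 : ∫ θ in Ioo (-Real.pi) Real.pi, ‖g (circleMap c s θ)‖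
        = ∫ θ in (0:ℝ)..(2*Real.pi), ‖g (circleMap c s θ)‖ := by
      rw [← integral_Ioc_eq_integral_Ioo,
        ← intervalIntegral.integral_of_le (by linarith [Real.pi_pos] : -Real.pi ≤ Real.pi)]
      have := hper.intervalIntegral_add_eq (-Real.pi) 0
      rw [zero_add] at this
      rw [← this]
      norm_num
      ring_nf
    rw [h1, h2]
    have := circle_mean_bound g hg c hs0
    calc 2 * Real.pi * ‖g c‖ * s
        = s * (2 * Real.pi * ‖g c‖) := by ring
      _ ≤ s * ∫ θ in (0:ℝ)..(2*Real.pi), ‖g (circleMap c s θ)‖ :=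
          mul_le_mul_of_nonneg_left this hs0.le
  have hInt2 : IntegrableOn (fun s : ℝ => ∫ θ in Ioo (-Real.pi) Real.pi,
      s * ‖g (c + Complex.polarCoord.symm (s, θ))‖) (Ioc (0:ℝ) r) := by
    have h := hGint
    rw [hS, IntegrableOn, Measure.volume_eq_prod, ← Measure.prod_restrict] at h
    exact h.integral_prod_left
  have hInt1 : IntegrableOn (fun s : ℝ => 2 * Real.pi * ‖g c‖ * s)
      (Ioc (0:ℝ) r) :=
    (continuous_const.mul continuous_id).continuousOn.integrableOn_compact isCompact_Icc |>.mono_set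
      Ioc_subset_Icc_self
  have houter := setIntegral_mono_on hInt1 hInt2 measurableSet_Ioc hinner
  have hval : ∫ s in Ioc (0:ℝ) r, 2 * Real.pi * ‖g c‖ * s
      = Real.pi * r ^ 2 * ‖g c‖ := by
    rw [integral_const_mul, ← intervalIntegral.integral_of_le hr.le, integral_id]
    ring
  rw [e1, e2, e3, e4, e5]
  rw [hval] at houter
  exact houter


open Real in
lemma key_real {m a d t : ℝ} (hm : 1 ≤ m) (ha : 6 * m < a) (hd0 : 0 ≤ d)
    (hd : d ≤ a ^ (1 - m)) (ht : |t| ≤ a * d) {x : ℝ} (hx0 : 0 ≤ x)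
    (hx : x = a ^ (2:ℕ) + (2 * t + d ^ 2)) :
    x ^ m ≤ a ^ (2*m) + 2*m*a^(2*m-2)*t + (m + 9*m^2) := by
  have hm0 : 0 < m := by linarith
  have ha1 : 1 ≤ a := by nlinarith
  have ha0 : 0 < a := by linarith
  have hr0 : 0 < a ^ (1 - m) := rpow_pos_of_pos ha0 _
  have hr1 : a ^ (1 - m) ≤ 1 := rpow_le_one_of_one_le_of_nonpos ha1 (by linarith)
  have hd1 : d ≤ 1 := hd.trans hr1
  -- s' and u
  set s' : ℝ := 2 * t + d ^ 2 with hs'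
  have hads : |s'| ≤ 3 * (a * d) := by
    have h1 : d ^ 2 ≤ a * d := by nlinarith
    have := abs_le.mp ht
    rw [abs_le]; constructor <;> nlinarith
  -- a * d ≤ a^(2-m)
  have hadr : a * d ≤ a ^ (2 - m) := by
    calc a * d ≤ a * a ^ (1 - m) := by nlinarith
      _ = a ^ (1:ℝ) * a ^ (1 - m) := by rw [rpow_one]
      _ = a ^ (2 - m) := by rw [← rpow_add ha0]; ring_nf
  have ham : a ≤ a ^ m := by
    calc a = a ^ (1:ℝ) := (rpow_one a).symm
      _ ≤ a ^ m := rpow_le_rpow_of_exponent_le ha1 hm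
  have h2m : a ^ (2 - m) = a ^ (2:ℝ) / a ^ m := by rw [rpow_sub ha0]
  have ha2 : a ^ ((2:ℝ)) = a ^ (2:ℕ) := by
    rw [← rpow_natCast a 2]; norm_num
  set u : ℝ := m * s' / a ^ (2:ℕ) with hu_def
  have ha2pos : (0:ℝ) < a ^ (2:ℕ) := by positivity
  have hu : |u| ≤ 1 / 2 := by
    rw [hu_def, abs_div, abs_of_pos ha2pos, abs_mul, abs_of_pos hm0, div_le_iff₀ ha2pos]
    have h1 : m * |s'| ≤ 3 * m * a ^ (2 - m) := by nlinarith
    have hm_pow : (0:ℝ) < a ^ m := rpow_pos_of_pos ha0 m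
    have hkey : 6 * m ≤ a ^ m := by nlinarith
    have h2 : 6 * m * a ^ (2 - m) ≤ (a:ℝ) ^ (2:ℕ) := by
      rw [h2m, ha2, ← mul_div_assoc, div_le_iff₀ hm_pow]
      nlinarith
    nlinarith
  have hu1 : |u| ≤ 1 := hu.trans (by norm_num)
  -- exp bound
  have hexp : Real.exp u ≤ 1 + u + u ^ 2 := by
    have h := Real.exp_bound hu1 (n := 2) (by norm_num)
    have hsum : ∑ i ∈ Finset.range 2, u ^ i / i.factorial = 1 + u := by
      simp [Finset.sum_range_succ]
    rw [hsum] at h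
    have h2 := (abs_le.mp h).2
    have habs2 : |u| ^ 2 = u ^ 2 := sq_abs u
    rw [habs2] at h2
    norm_num at h2
    nlinarith [sq_nonneg u]
  -- main chain
  have hfrac : a^(2:ℕ) * (s'/a^(2:ℕ)) = s' := mul_div_cancel₀ _ ha2pos.ne'
  have hchain1 : x ≤ a^(2:ℕ) * Real.exp (s'/a^(2:ℕ)) := by
    rw [hx]
    have h := Real.add_one_le_exp (s'/a^(2:ℕ))
    have h2 := mul_le_mul_of_nonneg_left h ha2pos.le
    rw [mul_add, mul_one, hfrac] at h2
    linarith
  have hxm : x ^ m ≤ (a^(2:ℕ) * Real.exp (s'/a^(2:ℕ))) ^ m :=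
    rpow_le_rpow hx0 hchain1 hm0.le
  have harg : s'/a^(2:ℕ) * m = u := by rw [hu_def]; ring
  have heq : (a^(2:ℕ) * Real.exp (s'/a^(2:ℕ))) ^ m = a ^ (2*m) * Real.exp u := by
    rw [mul_rpow (by positivity) (Real.exp_nonneg _), ← Real.exp_mul, harg, ← ha2,
      ← rpow_mul ha0.le]
  have h2mpos : (0:ℝ) < a ^ (2*m) := rpow_pos_of_pos ha0 _
  have hstep : a ^ (2*m) * Real.exp u ≤ a^(2*m) + a^(2*m) * u + a^(2*m) * u^2 := by
    calc a ^ (2*m) * Real.exp u ≤ a^(2*m) * (1 + u + u^2) :=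
          mul_le_mul_of_nonneg_left hexp h2mpos.le
      _ = a^(2*m) + a^(2*m) * u + a^(2*m) * u^2 := by ring
  have hdiv : a ^ (2*m) / a ^ (2:ℕ) = a ^ (2*m-2) := by
    rw [← ha2, ← rpow_sub ha0]
  have hAu : a ^ (2*m) * u = m * a^(2*m-2) * s' := by
    rw [hu_def, ← hdiv]
    field_simp
  have h2m2pos : (0:ℝ) < a^(2*m-2) := rpow_pos_of_pos ha0 _
  have hd2 : d^2 ≤ a ^ (2 - 2*m) := by
    have h1 : d^2 ≤ (a ^ (1-m))^(2:ℕ) := by nlinarith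
    calc d^2 ≤ (a^(1-m))^(2:ℕ) := h1
      _ = a ^ ((1-m)*(2:ℕ)) := by
          rw [← rpow_natCast (a^(1-m)) 2, ← rpow_mul ha0.le]
      _ = a ^ (2 - 2*m) := by norm_num; ring_nf
  have hone : a^(2*m-2) * a^(2-2*m) = 1 := by
    rw [← rpow_add ha0]
    norm_num
  have hmd : m * a^(2*m-2) * d^2 ≤ m := by
    have h1 : a^(2*m-2) * d^2 ≤ 1 := by
      calc a^(2*m-2)*d^2 ≤ a^(2*m-2)*a^(2-2*m) :=
            mul_le_mul_of_nonneg_left hd2 h2m2pos.le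
        _ = 1 := hone
    calc m * a^(2*m-2) * d^2 = m * (a^(2*m-2)*d^2) := by ring
      _ ≤ m * 1 := mul_le_mul_of_nonneg_left h1 hm0.le
      _ = m := mul_one m
  have hprod : a ^ (2*m) * a^(2-2*m) = a^(2:ℕ) := by
    rw [← rpow_add ha0, ← ha2]
    ring_nf
  have hd2m : a^(2*m) * d^2 ≤ a^(2:ℕ) := by
    calc a^(2*m) * d^2 ≤ a^(2*m) * a^(2-2*m) := mul_le_mul_of_nonneg_left hd2 h2mpos.le
      _ = a^(2:ℕ) := hprod
  have hu2 : a ^ (2*m) * u ^ 2 ≤ 9 * m ^ 2 := by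
    have h1 : s'^2 ≤ 9 * (a^(2:ℕ) * d^2) := by
      have h := pow_le_pow_left₀ (abs_nonneg s') hads 2
      rw [sq_abs] at h
      calc s' ^ 2 ≤ (3*(a*d))^2 := h
        _ = 9 * (a^(2:ℕ) * d^2) := by ring
    have key : a^(2*m) * (m * s')^2 ≤ 9*m^2 * ((a^(2:ℕ)) * (a^(2:ℕ))) := by
      calc a^(2*m) * (m*s')^2 = m^2 * (a^(2*m) * s'^2) := by ring
        _ ≤ m^2 * (a^(2*m) * (9*(a^(2:ℕ)*d^2))) :=
            mul_le_mul_of_nonneg_left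
              (mul_le_mul_of_nonneg_left h1 h2mpos.le) (sq_nonneg m)
        _ = 9*m^2 * a^(2:ℕ) * (a^(2*m) * d^2) := by ring
        _ ≤ 9*m^2 * a^(2:ℕ) * a^(2:ℕ) :=
            mul_le_mul_of_nonneg_left hd2m (by positivity)
        _ = 9*m^2 * ((a^(2:ℕ)) * (a^(2:ℕ))) := by ring
    have hrw : u^2 = (m*s')^2 / ((a^(2:ℕ)) * (a^(2:ℕ))) := by
      rw [hu_def, div_pow]
      congr 1
      ring
    rw [hrw, ← mul_div_assoc, div_le_iff₀ (by positivity)]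
    linarith [key]
  calc x ^ m ≤ (a^(2:ℕ) * Real.exp (s'/a^(2:ℕ))) ^ m := hxm
    _ = a ^ (2*m) * Real.exp u := heq
    _ ≤ a^(2*m) + a^(2*m)*u + a^(2*m)*u^2 := hstep
    _ = a^(2*m) + m*a^(2*m-2)*s' + a^(2*m)*u^2 := by rw [hAu]
    _ = a^(2*m) + (2*m*a^(2*m-2)*t + m*a^(2*m-2)*d^2) + a^(2*m)*u^2 := by
        rw [hs']
        ring
    _ ≤ a ^ (2*m) + 2*m*a^(2*m-2)*t + (m + 9*m^2) := by linarith [hmd, hu2]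

open MeasureTheory

/-- Pointwise growth estimate for functions in the weighted Fock space `F²_m`: if `f` is entire
and square-integrable against `exp(-|z|^{2m}) dA(z)`, then
`|f(z)| ≤ C (1+|z|)^{m-1} exp(|z|^{2m}/2)`. -/
theorem fock_space_pointwise_bound (m : ℝ) (hm : 1 ≤ m) (f : ℂ → ℂ)
    (hf : Differentiable ℂ f)
    (hint : Integrable (fun z : ℂ =>
      ‖f z‖ ^ 2 * Real.exp (-(‖z‖) ^ (2 * m)))) :
    ∃ C > 0, ∀ z : ℂ,
      ‖f z‖ ≤
        C * (1 + ‖z‖) ^ (m - 1) * Real.exp ((‖z‖) ^ (2 * m) / 2) := by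
  have hm0 : 0 < m := by linarith
  obtain ⟨I, hIdef⟩ : ∃ t : ℝ,
      (∫ z : ℂ, ‖f z‖ ^ 2 * Real.exp (-(‖z‖) ^ (2 * m))) = t :=
    ⟨_, rfl⟩
  have hI0 : 0 ≤ I := by
    rw [← hIdef]
    exact integral_nonneg fun z => by positivity
  obtain ⟨B, hBdef⟩ : ∃ t : ℝ, m + 9 * m ^ 2 = t := ⟨_, rfl⟩
  obtain ⟨K, hKdef⟩ : ∃ t : ℝ, Real.pi⁻¹ * Real.exp ((6 * m + 1) ^ (2 * m)) * I
      + Real.pi⁻¹ * Real.exp B * I + 1 = t := ⟨_, rfl⟩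
  have hK1 : (1:ℝ) ≤ K := by
    have h1 : 0 ≤ Real.pi⁻¹ * Real.exp ((6 * m + 1) ^ (2 * m)) * I := by positivity
    have h2 : 0 ≤ Real.pi⁻¹ * Real.exp B * I := by positivity
    rw [← hKdef]; linarith
  have hK : 0 < K := by linarith
  have hsetle : ∀ s : Set ℂ,
      (∫ w in s, ‖f w‖ ^ 2 * Real.exp (-(‖w‖) ^ (2 * m))) ≤ I :=
    fun s => hIdef ▸ setIntegral_le_integral hint
      (Filter.Eventually.of_forall fun w => by positivity)
  have key : ∀ z : ℂ, ‖f z‖ ^ 2 ≤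
      K * (1 + ‖z‖) ^ (2*m - 2) * Real.exp ((‖z‖) ^ (2 * m)) := by
    intro z
    have haz : 0 ≤ ‖z‖ := norm_nonneg z
    have hone_le : (1:ℝ) ≤ (1 + ‖z‖) ^ (2*m - 2) :=
      Real.one_le_rpow (by linarith) (by linarith)
    have hexp_one : (1:ℝ) ≤ Real.exp ((‖z‖) ^ (2 * m)) :=
      Real.one_le_exp (by positivity)
    rcases le_or_gt (‖z‖) (6*m) with hcase | hcase
    · -- small |z|
      have hgd : Differentiable ℂ (fun w => (f w)^2) := hf.pow 2
      have hmean := disc_mean_bound (fun w => (f w)^2) hgd z one_pos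
      simp only [norm_pow] at hmean
      have hptw : ∀ w ∈ closedBall z 1, ‖f w‖ ^ 2 ≤
          Real.exp ((6*m+1)^(2*m)) *
            (‖f w‖^2 * Real.exp (-(‖w‖)^(2*m))) := by
        intro w hw
        have hab : ‖w‖ ≤ 6*m+1 := by
          have h2 : dist w z ≤ 1 := mem_closedBall.mp hw
          have h3 : ‖w‖ ≤ ‖z‖ + ‖w - z‖ := by
            calc ‖w‖ = ‖z + (w - z)‖ := by ring_nf
              _ ≤ ‖z‖ + ‖w - z‖ := norm_add_le _ _
          rw [Complex.dist_eq] at h2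
          linarith
        have hrexp : (‖w‖)^(2*m) ≤ (6*m+1)^(2*m) :=
          Real.rpow_le_rpow (norm_nonneg w) hab (by positivity)
        calc ‖f w‖^2 = ‖f w‖^2 * 1 := (mul_one _).symm
          _ ≤ ‖f w‖^2 *
              Real.exp ((6*m+1)^(2*m) - (‖w‖)^(2*m)) :=
            mul_le_mul_of_nonneg_left (Real.one_le_exp (by linarith)) (by positivity)
          _ = Real.exp ((6*m+1)^(2*m)) *
              (‖f w‖^2 * Real.exp (-(‖w‖)^(2*m))) := by
            rw [Real.exp_sub, Real.exp_neg]
            ring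
      have hint1 : IntegrableOn (fun w => ‖f w‖^2) (closedBall z 1) :=
        ((continuous_norm.comp hf.continuous).pow 2).continuousOn.integrableOn_compact
          (isCompact_closedBall _ _)
      have hint2 : IntegrableOn (fun w => Real.exp ((6*m+1)^(2*m)) *
          (‖f w‖^2 * Real.exp (-(‖w‖)^(2*m)))) (closedBall z 1) :=
        (hint.integrableOn).const_mul _
      have hIineq : (∫ w in closedBall z 1, ‖f w‖^2) ≤
          Real.exp ((6*m+1)^(2*m)) * I := by
        calc (∫ w in closedBall z 1, ‖f w‖^2)
            ≤ ∫ w in closedBall z 1, Real.exp ((6*m+1)^(2*m)) *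
                (‖f w‖^2 * Real.exp (-(‖w‖)^(2*m))) :=
              setIntegral_mono_on hint1 hint2 measurableSet_closedBall hptw
          _ = Real.exp ((6*m+1)^(2*m)) * ∫ w in closedBall z 1,
                ‖f w‖^2 * Real.exp (-(‖w‖)^(2*m)) :=
              integral_const_mul _ _
          _ ≤ Real.exp ((6*m+1)^(2*m)) * I :=
              mul_le_mul_of_nonneg_left (hsetle _) (Real.exp_nonneg _)
      have hπ := Real.pi_pos
      have hfz : ‖f z‖^2 ≤ K := by
        rw [one_pow, mul_one] at hmean
        have h4 : Real.pi * ‖f z‖^2 ≤ Real.exp ((6*m+1)^(2*m)) * I :=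
          le_trans hmean hIineq
        have h5 : ‖f z‖^2 ≤
            Real.pi⁻¹ * Real.exp ((6*m+1)^(2*m)) * I := by
          calc ‖f z‖^2
              = Real.pi⁻¹ * (Real.pi * ‖f z‖^2) := by
                field_simp
            _ ≤ Real.pi⁻¹ * (Real.exp ((6*m+1)^(2*m)) * I) :=
                mul_le_mul_of_nonneg_left h4 (by positivity)
            _ = Real.pi⁻¹ * Real.exp ((6*m+1)^(2*m)) * I := by ring
        have h6 : 0 ≤ Real.pi⁻¹ * Real.exp B * I := by positivity
        rw [← hKdef]
        linarith
      calc ‖f z‖^2 ≤ K := hfz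
        _ = K * 1 * 1 := by ring
        _ ≤ K * (1 + ‖z‖)^(2*m-2) * Real.exp ((‖z‖)^(2*m)) := by
            apply mul_le_mul (mul_le_mul_of_nonneg_left hone_le hK.le) hexp_one
              (by norm_num) (by positivity)
    · -- large |z|
      set a := ‖z‖ with hadef
      have ha0 : 0 < a := by nlinarith
      have ha1 : 1 ≤ a := by nlinarith
      set r : ℝ := a ^ ((1:ℝ) - m) with hrdef
      have hr0 : 0 < r := Real.rpow_pos_of_pos ha0 _
      set h : ℂ → ℂ := fun w => (↑(a^(2*m)) : ℂ) +
          (↑(2*m*a^(2*m-2)) : ℂ) * ((starRingEnd ℂ) z * (w - z)) with hhdef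
      have hhd : Differentiable ℂ h := by
        apply (differentiable_const _).add
        exact ((differentiable_id.sub_const z).const_mul _).const_mul _
      set g : ℂ → ℂ := fun w => (f w)^2 * Complex.exp (-h w) with hgdef
      have hgd : Differentiable ℂ g := (hf.pow 2).mul ((hhd.neg).cexp)
      have habs_g : ∀ w, ‖g w‖ =
          ‖f w‖^2 * Real.exp (-(h w).re) := by
        intro w
        rw [hgdef]
        simp [norm_mul, norm_pow, Complex.norm_exp, Complex.neg_re]
      have hre : ∀ w, (h w).re =
          a^(2*m) + 2*m*a^(2*m-2) * ((starRingEnd ℂ) z * (w - z)).re := by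
        intro w
        rw [hhdef]
        simp [Complex.add_re, Complex.mul_re, Complex.ofReal_re, Complex.ofReal_im]
      have hkey : ∀ w ∈ closedBall z r, (‖w‖)^(2*m) ≤ (h w).re + B := by
        intro w hw
        set d := ‖w - z‖ with hddef
        set t := ((starRingEnd ℂ) z * (w - z)).re with htdef
        have hd0 : 0 ≤ d := norm_nonneg _
        have hdr : d ≤ r := by
          rw [hddef, ← Complex.dist_eq]
          exact mem_closedBall.mp hw
        have ht : |t| ≤ a * d := by
          have h1 := Complex.abs_re_le_norm ((starRingEnd ℂ) z * (w - z))
          rw [norm_mul, Complex.norm_conj] at h1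
          exact h1
        have hx : (‖w‖)^(2:ℕ) = a^(2:ℕ) + (2*t + d^2) := by
          have h1 : Complex.normSq w = Complex.normSq z + Complex.normSq (w - z)
              + 2 * (z * (starRingEnd ℂ) (w-z)).re := by
            conv_lhs => rw [show w = z + (w - z) by ring]
            exact Complex.normSq_add z (w - z)
          have h2 : (z * (starRingEnd ℂ) (w-z)).re = t := by
            calc (z * (starRingEnd ℂ) (w-z)).re
                = ((starRingEnd ℂ) (z * (starRingEnd ℂ) (w-z))).re :=
                  (Complex.conj_re _).symm
              _ = t := by rw [map_mul, Complex.conj_conj, htdef]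
          rw [Complex.sq_norm, h1, h2, ← Complex.sq_norm z, ← Complex.sq_norm (w - z),
            ← hadef, ← hddef]
          ring
        have hk := key_real hm hcase hd0 (hrdef ▸ hdr) ht
          (by positivity : (0:ℝ) ≤ (‖w‖)^(2:ℕ)) hx
        have hconv : (‖w‖)^(2*m) = ((‖w‖)^(2:ℕ) : ℝ)^m := by
          rw [← Real.rpow_natCast (‖w‖) 2,
            ← Real.rpow_mul (norm_nonneg w)]
          norm_num
        rw [hconv, hre w, ← hBdef]
        linarith
      have hmean := disc_mean_bound g hgd z hr0
      have hgz : ‖g z‖ = ‖f z‖^2 * Real.exp (-(a^(2*m))) := by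
        rw [habs_g z, hre z]
        norm_num
      have hptw : ∀ w ∈ closedBall z r, ‖g w‖ ≤
          Real.exp B * (‖f w‖^2 * Real.exp (-(‖w‖)^(2*m))) := by
        intro w hw
        rw [habs_g w]
        have h1 := hkey w hw
        have h2 : Real.exp (-(h w).re) ≤
            Real.exp (B - (‖w‖)^(2*m)) :=
          Real.exp_le_exp.mpr (by linarith)
        calc ‖f w‖^2 * Real.exp (-(h w).re)
            ≤ ‖f w‖^2 * Real.exp (B - (‖w‖)^(2*m)) :=
              mul_le_mul_of_nonneg_left h2 (by positivity)
          _ = Real.exp B * (‖f w‖^2 * Real.exp (-(‖w‖)^(2*m))) := by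
              rw [Real.exp_sub, Real.exp_neg]
              ring
      have hint1 : IntegrableOn (fun w => ‖g w‖) (closedBall z r) :=
        (continuous_norm.comp hgd.continuous).continuousOn.integrableOn_compact
          (isCompact_closedBall _ _)
      have hint2 : IntegrableOn (fun w => Real.exp B *
          (‖f w‖^2 * Real.exp (-(‖w‖)^(2*m)))) (closedBall z r) :=
        (hint.integrableOn).const_mul _
      have hI2 : (∫ w in closedBall z r, ‖g w‖) ≤ Real.exp B * I := by
        calc (∫ w in closedBall z r, ‖g w‖)
            ≤ ∫ w in closedBall z r, Real.exp B *
                (‖f w‖^2 * Real.exp (-(‖w‖)^(2*m))) :=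
              setIntegral_mono_on hint1 hint2 measurableSet_closedBall hptw
          _ = Real.exp B * ∫ w in closedBall z r,
                ‖f w‖^2 * Real.exp (-(‖w‖)^(2*m)) :=
              integral_const_mul _ _
          _ ≤ Real.exp B * I :=
              mul_le_mul_of_nonneg_left (hsetle _) (Real.exp_nonneg _)
      rw [hgz] at hmean
      have hmean2 : Real.pi * r^2 * (‖f z‖^2 * Real.exp (-(a^(2*m))))
          ≤ Real.exp B * I := le_trans hmean hI2
      have hπ := Real.pi_pos
      have hrinv : r^(2:ℕ) = a^((2:ℝ)-2*m) := by
        rw [hrdef, ← Real.rpow_natCast (a^((1:ℝ)-m)) 2, ← Real.rpow_mul ha0.le]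
        congr 1
        push_cast
        ring
      have hπ1 : Real.pi⁻¹ * Real.pi = 1 := inv_mul_cancel₀ hπ.ne'
      have hprod' : a^(2*m-2) * a^((2:ℝ)-2*m) = 1 := by
        have hzero : (2*m-2) + ((2:ℝ)-2*m) = 0 := by ring
        rw [← Real.rpow_add ha0, hzero, Real.rpow_zero]
      have hexps' : Real.exp (a^(2*m)) * Real.exp (-(a^(2*m))) = 1 := by
        rw [← Real.exp_add]
        simp
      have hc0 : 0 ≤ Real.pi⁻¹ * a^(2*m-2) * Real.exp (a^(2*m)) := by positivity
      have hstep : ‖f z‖^2 ≤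
          Real.pi⁻¹ * a^(2*m-2) * Real.exp (a^(2*m)) * (Real.exp B * I) := by
        calc ‖f z‖^2
            = (Real.pi⁻¹*Real.pi) * (a^(2*m-2)*a^((2:ℝ)-2*m)) *
                (Real.exp (a^(2*m)) * Real.exp (-(a^(2*m)))) * ‖f z‖^2 := by
              rw [hπ1, hprod', hexps']
              ring
          _ = (Real.pi⁻¹ * a^(2*m-2) * Real.exp (a^(2*m))) *
                (Real.pi * r^2 * (‖f z‖^2 * Real.exp (-(a^(2*m))))) := by
              rw [hrinv]
              ring
          _ ≤ (Real.pi⁻¹ * a^(2*m-2) * Real.exp (a^(2*m))) * (Real.exp B * I) :=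
              mul_le_mul_of_nonneg_left hmean2 hc0
      have hmono : a^(2*m-2) ≤ (1+a)^(2*m-2) :=
        Real.rpow_le_rpow ha0.le (by linarith) (by linarith)
      have hKc : Real.pi⁻¹ * Real.exp B * I ≤ K := by
        have h1 : 0 ≤ Real.pi⁻¹ * Real.exp ((6 * m + 1) ^ (2 * m)) * I := by positivity
        rw [← hKdef]
        linarith
      calc ‖f z‖^2
          ≤ Real.pi⁻¹ * a^(2*m-2) * Real.exp (a^(2*m)) * (Real.exp B * I) := hstep
        _ = (Real.pi⁻¹ * Real.exp B * I) * a^(2*m-2) * Real.exp (a^(2*m)) := by ring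
        _ ≤ K * (1+a)^(2*m-2) * Real.exp (a^(2*m)) := by
            apply mul_le_mul _ le_rfl (Real.exp_nonneg _) _
            · exact mul_le_mul hKc hmono (by positivity) hK.le
            · positivity
  refine ⟨Real.sqrt K, Real.sqrt_pos.mpr hK, fun z => ?_⟩
  have hz2 := key z
  have h1 : ‖f z‖ = Real.sqrt (‖f z‖ ^ 2) :=
    (Real.sqrt_sq (norm_nonneg _)).symm
  rw [h1]
  refine (Real.sqrt_le_sqrt hz2).trans (le_of_eq ?_)
  rw [Real.exp_half]
  rw [Real.sqrt_mul (by positivity : (0:ℝ) ≤ K * (1 + ‖z‖) ^ (2*m - 2)),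
    Real.sqrt_mul hK.le]
  congr 1
  rw [Real.sqrt_eq_rpow ((1 + ‖z‖) ^ (2*m-2)),
    ← Real.rpow_mul (by positivity : (0:ℝ) ≤ 1 + ‖z‖)]
  congr 1
  ring
end

section
/- For every m ≥ 1 there exist constants C > 0 and R > 0 such that for all a > 0, all real d with 0 ≤ d ≤ m, and all x, r > 0 with x·r > R: ∫_{|θ| ≤ π/(2m)} exp(-(xr)^m + 2a·r^d·sin²(dθ/2))·(xr)^{m-1}·exp((xr)^m·cos(mθ)) dθ ≤ C·(xr)^{m-1}·∫₀¹ exp(-((xr)^m - a·r^d)·t²) dt. -/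
open Real

set_option maxHeartbeats 2000000 in
/-- Core estimate of Lemma 5: for every `m ≥ 1` there exist `C > 0` and `R > 0` such that for
all `a > 0`, `0 ≤ d ≤ m`, and `x, r > 0` with `xr > R`,
`∫_{|θ|≤π/(2m)} exp(-(xr)^m + 2a r^d sin²(dθ/2)) (xr)^{m-1} exp((xr)^m cos(mθ)) dθ
  ≤ C (xr)^{m-1} ∫₀¹ exp(-((xr)^m - a r^d) t²) dt`. -/
theorem angular_integral_estimate (m : ℝ) (hm : 1 ≤ m) :
    ∃ C > 0, ∃ R > 0, ∀ a d x r : ℝ, 0 < a → 0 ≤ d → d ≤ m → 0 < x → 0 < r → R < x * r →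
      (∫ θ in (-(π / (2 * m)))..(π / (2 * m)),
          Real.exp (-(x * r) ^ m + 2 * a * r ^ d * (Real.sin (d * θ / 2)) ^ 2) *
            (x * r) ^ (m - 1) * Real.exp ((x * r) ^ m * Real.cos (m * θ))) ≤
        C * (x * r) ^ (m - 1) *
          ∫ t in (0 : ℝ)..1, Real.exp (-((x * r) ^ m - a * r ^ d) * t ^ 2) := by
  have hm0 : (0:ℝ) < m := lt_of_lt_of_le one_pos hm
  refine ⟨4 / m, by positivity, 1, one_pos, ?_⟩
  intro a d x r ha hd0 hdm hx hr hxr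
  set L := π / (2 * m) with hL
  have hL0 : 0 < L := by positivity
  set M := (x * r) ^ m with hM
  set A := a * r ^ d with hA
  set B := M - A with hB
  set P := (x * r) ^ (m - 1) with hP
  have hP0 : 0 < P := rpow_pos_of_pos (by positivity) _
  have hA0 : 0 < A := by
    have := rpow_pos_of_pos hr d; positivity
  -- pointwise bound
  have key : ∀ θ ∈ Set.Icc (-L) L,
      Real.exp (-M + 2 * a * r ^ d * (Real.sin (d * θ / 2)) ^ 2) * P *
          Real.exp (M * Real.cos (m * θ)) ≤
        (2 / m) * P * ((Real.sqrt 2 * (Real.cos (m * θ / 2) * (m / 2))) *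
          Real.exp (-B * (Real.sqrt 2 * Real.sin (m * θ / 2)) ^ 2)) := by
    intro θ hθ
    have habs : |θ| ≤ L := abs_le.2 ⟨hθ.1, hθ.2⟩
    have hmabs : m * |θ| / 2 ≤ π / 4 := by
      have : m * |θ| ≤ m * L := by nlinarith [habs]
      have hmL : m * L = π / 2 := by rw [hL]; field_simp
      linarith
    have hsinsq : (Real.sin (d * θ / 2)) ^ 2 ≤ (Real.sin (m * θ / 2)) ^ 2 := by
      have h1 : (Real.sin (d * θ / 2)) ^ 2 = (Real.sin (d * |θ| / 2)) ^ 2 := by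
        rcases abs_cases θ with ⟨h, _⟩ | ⟨h, _⟩
        · rw [h]
        · rw [h, show d * -θ / 2 = -(d * θ / 2) by ring, Real.sin_neg, neg_sq]
      have h2 : (Real.sin (m * θ / 2)) ^ 2 = (Real.sin (m * |θ| / 2)) ^ 2 := by
        rcases abs_cases θ with ⟨h, _⟩ | ⟨h, _⟩
        · rw [h]
        · rw [h, show m * -θ / 2 = -(m * θ / 2) by ring, Real.sin_neg, neg_sq]
      rw [h1, h2]
      have habs0 : 0 ≤ |θ| := abs_nonneg θ
      have hdle : d * |θ| / 2 ≤ m * |θ| / 2 := by nlinarith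
      have hd2 : (0:ℝ) ≤ d * |θ| / 2 := by positivity
      have hm2 : m * |θ| / 2 ≤ π / 2 := le_trans hmabs (by linarith [pi_pos])
      have hsle : Real.sin (d * |θ| / 2) ≤ Real.sin (m * |θ| / 2) :=
        sin_le_sin_of_le_of_le_pi_div_two (by linarith [pi_pos]) hm2 hdle
      have hsnn : 0 ≤ Real.sin (d * |θ| / 2) :=
        sin_nonneg_of_nonneg_of_le_pi hd2 (by linarith [pi_pos])
      exact pow_le_pow_left₀ hsnn hsle 2
    have hcosm : Real.cos (m * θ) = 1 - 2 * (Real.sin (m * θ / 2)) ^ 2 := by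
      have h2 := Real.cos_two_mul (m * θ / 2)
      rw [show 2 * (m * θ / 2) = m * θ by ring] at h2
      nlinarith [Real.sin_sq_add_cos_sq (m * θ / 2)]
    have hcoshalf : Real.sqrt 2 / 2 ≤ Real.cos (m * θ / 2) := by
      have h1 : |m * θ / 2| ≤ π / 4 := by
        rw [abs_div, abs_mul, abs_of_pos hm0]
        simpa using hmabs
      have := Real.cos_pi_div_four
      calc Real.sqrt 2 / 2 = Real.cos (π/4) := Real.cos_pi_div_four.symm
        _ ≤ Real.cos (|m * θ / 2|) := by
            apply cos_le_cos_of_nonneg_of_le_pi (abs_nonneg _) (by linarith [pi_pos]) h1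
        _ = Real.cos (m * θ / 2) := Real.cos_abs _
    -- exponent bound
    have hexp : -M + 2 * a * r ^ d * (Real.sin (d * θ / 2)) ^ 2 + M * Real.cos (m * θ)
        ≤ -B * (Real.sqrt 2 * Real.sin (m * θ / 2)) ^ 2 := by
      have hsq2 : (Real.sqrt 2 * Real.sin (m * θ / 2)) ^ 2
          = 2 * (Real.sin (m * θ / 2)) ^ 2 := by
        rw [mul_pow, Real.sq_sqrt (by norm_num : (0:ℝ) ≤ 2)]
      rw [hcosm, hsq2]
      have hkey2 : 2 * a * r ^ d * (Real.sin (d * θ / 2)) ^ 2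
          ≤ 2 * A * (Real.sin (m * θ / 2)) ^ 2 := by
        rw [hA]
        have hrd : (0:ℝ) ≤ 2 * a * r ^ d := by positivity
        calc 2 * a * r ^ d * (Real.sin (d * θ / 2)) ^ 2
            ≤ 2 * a * r ^ d * (Real.sin (m * θ / 2)) ^ 2 :=
              mul_le_mul_of_nonneg_left hsinsq hrd
          _ = 2 * (a * r ^ d) * (Real.sin (m * θ / 2)) ^ 2 := by ring
      calc -M + 2 * a * r ^ d * (Real.sin (d * θ / 2)) ^ 2
            + M * (1 - 2 * (Real.sin (m * θ / 2)) ^ 2)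
          = 2 * a * r ^ d * (Real.sin (d * θ / 2)) ^ 2
            - 2 * M * (Real.sin (m * θ / 2)) ^ 2 := by ring
        _ ≤ 2 * A * (Real.sin (m * θ / 2)) ^ 2
            - 2 * M * (Real.sin (m * θ / 2)) ^ 2 := by linarith
        _ = -B * (2 * (Real.sin (m * θ / 2)) ^ 2) := by rw [hB]; ring
    have hfac : 1 ≤ Real.sqrt 2 * Real.cos (m * θ / 2) := by
      have h2 : (1:ℝ) ≤ Real.sqrt 2 * (Real.sqrt 2 / 2) := by
        rw [show Real.sqrt 2 * (Real.sqrt 2 / 2) = Real.sqrt 2 * Real.sqrt 2 / 2 by ring,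
          Real.mul_self_sqrt (by norm_num : (0:ℝ) ≤ 2)]
        norm_num
      nlinarith [Real.sqrt_nonneg 2]
    have lhs_eq : Real.exp (-M + 2 * a * r ^ d * (Real.sin (d * θ / 2)) ^ 2) * P *
        Real.exp (M * Real.cos (m * θ))
        = P * Real.exp (-M + 2 * a * r ^ d * (Real.sin (d * θ / 2)) ^ 2
            + M * Real.cos (m * θ)) := by
      rw [Real.exp_add (-M + 2 * a * r ^ d * (Real.sin (d * θ / 2)) ^ 2)
        (M * Real.cos (m * θ))]
      ring
    have rhs_eq : (2 / m) * P * ((Real.sqrt 2 * (Real.cos (m * θ / 2) * (m / 2))) *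
          Real.exp (-B * (Real.sqrt 2 * Real.sin (m * θ / 2)) ^ 2))
        = P * ((Real.sqrt 2 * Real.cos (m * θ / 2)) *
          Real.exp (-B * (Real.sqrt 2 * Real.sin (m * θ / 2)) ^ 2)) := by
      field_simp
    rw [lhs_eq, rhs_eq]
    have h1 : Real.exp (-M + 2 * a * r ^ d * (Real.sin (d * θ / 2)) ^ 2
        + M * Real.cos (m * θ)) ≤ Real.exp (-B * (Real.sqrt 2 * Real.sin (m * θ / 2)) ^ 2) :=
      Real.exp_le_exp.2 hexp
    calc P * Real.exp (-M + 2 * a * r ^ d * (Real.sin (d * θ / 2)) ^ 2 + M * Real.cos (m * θ))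
        ≤ P * Real.exp (-B * (Real.sqrt 2 * Real.sin (m * θ / 2)) ^ 2) := by
          exact mul_le_mul_of_nonneg_left h1 hP0.le
      _ ≤ P * ((Real.sqrt 2 * Real.cos (m * θ / 2)) *
          Real.exp (-B * (Real.sqrt 2 * Real.sin (m * θ / 2)) ^ 2)) := by
          have he : 0 < Real.exp (-B * (Real.sqrt 2 * Real.sin (m * θ / 2)) ^ 2) :=
            Real.exp_pos _
          exact mul_le_mul_of_nonneg_left (le_mul_of_one_le_left he.le hfac) hP0.le
  -- integrability
  have hcont1 : Continuous fun θ : ℝ =>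
      Real.exp (-M + 2 * a * r ^ d * (Real.sin (d * θ / 2)) ^ 2) * P *
        Real.exp (M * Real.cos (m * θ)) := by fun_prop
  have hcont2 : Continuous fun θ : ℝ =>
      (2 / m) * P * ((Real.sqrt 2 * (Real.cos (m * θ / 2) * (m / 2))) *
        Real.exp (-B * (Real.sqrt 2 * Real.sin (m * θ / 2)) ^ 2)) := by fun_prop
  have step1 : (∫ θ in (-L)..L,
        Real.exp (-M + 2 * a * r ^ d * (Real.sin (d * θ / 2)) ^ 2) * P *
          Real.exp (M * Real.cos (m * θ)))
      ≤ ∫ θ in (-L)..L, (2 / m) * P * ((Real.sqrt 2 * (Real.cos (m * θ / 2) * (m / 2))) *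
          Real.exp (-B * (Real.sqrt 2 * Real.sin (m * θ / 2)) ^ 2)) := by
    apply intervalIntegral.integral_mono_on (by linarith)
      (hcont1.intervalIntegrable _ _) (hcont2.intervalIntegrable _ _) key
  -- change of variables
  have hderiv : ∀ θ ∈ Set.uIcc (-L) L,
      HasDerivAt (fun θ : ℝ => Real.sqrt 2 * Real.sin (m * θ / 2))
        (Real.sqrt 2 * (Real.cos (m * θ / 2) * (m / 2))) θ := by
    intro θ _
    have h : HasDerivAt (fun θ : ℝ => m * θ / 2) (m / 2) θ := by
      simpa using ((hasDerivAt_id θ).const_mul m).div_const 2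
    exact ((h.sin).const_mul (Real.sqrt 2))
  have hcg : Continuous fun t : ℝ => Real.exp (-B * t ^ 2) :=
    Real.continuous_exp.comp (continuous_const.mul (continuous_pow 2))
  have hcf : Continuous fun θ : ℝ => Real.sqrt 2 * (Real.cos (m * θ / 2) * (m / 2)) :=
    continuous_const.mul ((Real.continuous_cos.comp
      ((continuous_const.mul continuous_id).div_const 2)).mul continuous_const)
  have hsubst := intervalIntegral.integral_comp_smul_deriv hderiv hcf.continuousOn hcg
  simp only [smul_eq_mul, Function.comp] at hsubst
  have hends : Real.sqrt 2 * Real.sin (m * L / 2) = 1 ∧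
      Real.sqrt 2 * Real.sin (m * (-L) / 2) = -1 := by
    have hmL : m * L / 2 = π / 4 := by rw [hL]; field_simp; ring
    have hmL' : m * (-L) / 2 = -(π / 4) := by rw [hL]; field_simp; ring
    rw [hmL, hmL', Real.sin_neg, Real.sin_pi_div_four]
    constructor
    · rw [show Real.sqrt 2 * (Real.sqrt 2 / 2) = Real.sqrt 2 * Real.sqrt 2 / 2 by ring,
        Real.mul_self_sqrt (by norm_num : (0:ℝ) ≤ 2)]; norm_num
    · rw [show Real.sqrt 2 * -(Real.sqrt 2 / 2) = -(Real.sqrt 2 * Real.sqrt 2 / 2) by ring,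
        Real.mul_self_sqrt (by norm_num : (0:ℝ) ≤ 2)]; norm_num
  have heven : (∫ t in (-1 : ℝ)..1, Real.exp (-B * t ^ 2))
      = 2 * ∫ t in (0:ℝ)..1, Real.exp (-B * t ^ 2) := by
    have hie : ∀ u v : ℝ, IntervalIntegrable (fun t => Real.exp (-B * t ^ 2)) MeasureTheory.volume u v := by
      intro u v; exact (by fun_prop : Continuous fun t : ℝ => Real.exp (-B * t ^ 2)).intervalIntegrable u v
    have hsplit := intervalIntegral.integral_add_adjacent_intervals (hie (-1) 0) (hie 0 1)
    have hneg : (∫ t in (0:ℝ)..1, Real.exp (-B * (-t) ^ 2))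
        = ∫ t in (-1:ℝ)..(-0:ℝ), Real.exp (-B * t ^ 2) :=
      intervalIntegral.integral_comp_neg (fun t => Real.exp (-B * t ^ 2))
    simp only [neg_sq, neg_zero] at hneg
    linarith
  -- combine
  have hfinal : (∫ θ in (-L)..L, (2 / m) * P *
        ((Real.sqrt 2 * (Real.cos (m * θ / 2) * (m / 2))) *
          Real.exp (-B * (Real.sqrt 2 * Real.sin (m * θ / 2)) ^ 2)))
      = (4 / m) * P * ∫ t in (0:ℝ)..1, Real.exp (-B * t ^ 2) := by
    rw [intervalIntegral.integral_const_mul, hsubst, hends.1, hends.2, heven]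
    ring
  calc (∫ θ in (-L)..L,
        Real.exp (-M + 2 * a * r ^ d * (Real.sin (d * θ / 2)) ^ 2) * P *
          Real.exp (M * Real.cos (m * θ)))
      ≤ (4 / m) * P * ∫ t in (0:ℝ)..1, Real.exp (-B * t ^ 2) := by
        rw [← hfinal]; exact step1
    _ = (4 / m) * P * ∫ t in (0:ℝ)..1, Real.exp (-(M - A) * t ^ 2) := by rw [hB]
end

section
/- Let m ≥ 1, 1 ≤ d < 2m (d an integer), a > 0, and define h_x(r) = (r^m - x^m)² - 2a(x^d - r^d) for r > 0. For each sufficiently large x, the function h_x has a critical point r_x = x(1 + ρ_x) with ρ_x ~ -(a d / m²)·x^{d - 2m} as x → ∞, and at this point h_x''(r_x) ~ 2m²·x^{2m-2} and -h_x(r_x) ~ (a²d²/m²)·x^{2d - 2m}. -/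
open Filter Set


/-- The function `h_x(r) = (r^m - x^m)² - 2a(x^d - r^d)`. -/
noncomputable def hAux (m : ℝ) (d : ℕ) (a x r : ℝ) : ℝ :=
  (r ^ m - x ^ m) ^ 2 - 2 * a * (x ^ (d : ℝ) - r ^ (d : ℝ))


lemma slope_rpow (q : ℝ) :
    Tendsto (fun t : ℝ => ((1 + t) ^ q - 1) / t) (nhdsWithin 0 {0}ᶜ) (nhds q) := by
  have h1 : HasDerivAt (fun t : ℝ => (1 + t) ^ q) q 0 := by
    have := ((hasDerivAt_id (0:ℝ)).const_add 1).rpow_const (p := q) (Or.inl (by norm_num))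
    simpa using this
  have h2 := hasDerivAt_iff_tendsto_slope.mp h1
  simp only [slope_fun_def, sub_zero] at h2
  simpa [div_eq_inv_mul] using h2

noncomputable def gf (m : ℝ) (d : ℕ) (a x s : ℝ) : ℝ :=
  2 * m * s ^ (m - 1) * (s ^ m - x ^ m) + 2 * a * (d : ℝ) * s ^ ((d : ℝ) - 1)

lemma hasDerivAt_hAux (m : ℝ) (d : ℕ) (a x r : ℝ) (hr : 0 < r) :
    HasDerivAt (fun s => hAux m d a x s) (gf m d a x r) r := by
  have h1 : HasDerivAt (fun s : ℝ => s ^ m) (m * r ^ (m - 1)) r :=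
    Real.hasDerivAt_rpow_const (Or.inl hr.ne')
  have h2 : HasDerivAt (fun s : ℝ => s ^ (d : ℝ)) ((d : ℝ) * r ^ ((d : ℝ) - 1)) r :=
    Real.hasDerivAt_rpow_const (Or.inl hr.ne')
  have h3 := ((h1.sub_const (x ^ m)).pow 2).sub ((h2.const_sub (x ^ (d : ℝ))).const_mul (2 * a))
  refine h3.congr_deriv ?_
  simp [gf]
  ring

lemma deriv_hAux (m : ℝ) (d : ℕ) (a x r : ℝ) (hr : 0 < r) :
    deriv (fun s => hAux m d a x s) r = gf m d a x r :=
  (hasDerivAt_hAux m d a x r hr).deriv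

lemma hasDerivAt_gf (m : ℝ) (d : ℕ) (a x r : ℝ) (hr : 0 < r) :
    HasDerivAt (fun s => gf m d a x s)
      (2 * m * ((m * r ^ (m - 1)) * r ^ (m - 1) + (r ^ m - x ^ m) * ((m - 1) * r ^ (m - 1 - 1)))
        + 2 * a * (d : ℝ) * (((d : ℝ) - 1) * r ^ ((d : ℝ) - 1 - 1))) r := by
  have h1 : HasDerivAt (fun s : ℝ => s ^ m) (m * r ^ (m - 1)) r :=
    Real.hasDerivAt_rpow_const (Or.inl hr.ne')
  have h1' : HasDerivAt (fun s : ℝ => s ^ (m - 1)) ((m - 1) * r ^ (m - 1 - 1)) r :=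
    Real.hasDerivAt_rpow_const (Or.inl hr.ne')
  have h2' : HasDerivAt (fun s : ℝ => s ^ ((d : ℝ) - 1)) (((d : ℝ) - 1) * r ^ ((d : ℝ) - 1 - 1)) r :=
    Real.hasDerivAt_rpow_const (Or.inl hr.ne')
  have h3 := ((h1'.mul (h1.sub_const (x ^ m))).const_mul (2 * m)).add
    (h2'.const_mul (2 * a * (d : ℝ)))
  have h4 : (fun s => gf m d a x s) = (fun s : ℝ =>
      2 * m * (s ^ (m - 1) * (s ^ m - x ^ m)) + 2 * a * (d:ℝ) * s ^ ((d:ℝ) - 1)) := by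
    funext s; simp only [gf]; ring
  rw [h4]
  refine h3.congr_deriv ?_
  ring

lemma deriv2_hAux (m : ℝ) (d : ℕ) (a x r : ℝ) (hr : 0 < r) :
    deriv (deriv (fun s => hAux m d a x s)) r =
      2 * m * ((m * r ^ (m - 1)) * r ^ (m - 1) + (r ^ m - x ^ m) * ((m - 1) * r ^ (m - 1 - 1)))
        + 2 * a * (d : ℝ) * (((d : ℝ) - 1) * r ^ ((d : ℝ) - 1 - 1)) := by
  have heq : deriv (fun s => hAux m d a x s) =ᶠ[nhds r] (fun s => gf m d a x s) := by
    filter_upwards [eventually_gt_nhds hr] with s hs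
    exact deriv_hAux m d a x s hs
  rw [Filter.EventuallyEq.deriv_eq heq]
  exact (hasDerivAt_gf m d a x r hr).deriv

lemma gf_factor (m : ℝ) (d : ℕ) (a x ρ : ℝ) (hx : 0 < x) (hρ : -1 < ρ) :
    gf m d a x (x * (1 + ρ)) = 2 * x ^ (2 * m - 1) *
      (m * (1 + ρ) ^ (m - 1) * ((1 + ρ) ^ m - 1)
        + a * (d : ℝ) * x ^ ((d : ℝ) - 2 * m) * (1 + ρ) ^ ((d : ℝ) - 1)) := by
  have h1 : (0:ℝ) ≤ 1 + ρ := by linarith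
  have e1 : x ^ ((d:ℝ) - 1) = x ^ (2 * m - 1) * x ^ ((d : ℝ) - 2 * m) := by
    rw [← Real.rpow_add hx]; congr 1; ring
  have e2 : x ^ (2 * m - 1) = x ^ (m - 1) * x ^ m := by
    rw [← Real.rpow_add hx]; congr 1; ring
  simp only [gf, Real.mul_rpow hx.le h1, e1, e2]
  ring

lemma key_ineq (m w x X H P Q S T : ℝ) (hm : 1 ≤ m) (hx : 0 < x) (hw0 : 0 < w)
    (hw2 : 4 * m * w < H ^ 2) (hX0 : 0 < X) (hH0 : 0 < H)
    (hP : X * H / x ≤ P) (hQ : Q ≤ 4 * X / x ^ 2) (hQ0 : 0 < Q)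
    (hS1 : S ≤ X) (hS2 : X * (1 - m * w) ≤ S) (hT : 0 ≤ T) :
    0 < 2 * m * (m * P * P + (S - X) * ((m - 1) * Q)) + T := by
  have hm0 : 0 < m := lt_of_lt_of_le one_pos hm
  have hP0 : 0 < X * H / x := by positivity
  have hPpos : 0 < P := lt_of_lt_of_le hP0 hP
  have k1 : m * (X * H / x) * (X * H / x) ≤ m * P * P := by
    have h := mul_le_mul hP hP hP0.le hPpos.le
    nlinarith
  have k2 : (X - S) * ((m - 1) * Q) ≤ (X * m * w) * ((m - 1) * (4 * X / x ^ 2)) :=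
    mul_le_mul (by nlinarith) (mul_le_mul_of_nonneg_left hQ (by linarith))
      (mul_nonneg (by linarith) hQ0.le) (by positivity)
  have k3 : (X * m * w) * ((m - 1) * (4 * X / x ^ 2)) < m * (X * H / x) * (X * H / x) := by
    have hx2 : 0 < x ^ 2 := by positivity
    have k3' : 4 * (m - 1) * w < H ^ 2 := by nlinarith
    have e1 : (X * m * w) * ((m - 1) * (4 * X / x ^ 2)) = (4 * m * (m-1) * w * X ^ 2) / x ^ 2 := by
      field_simp
    have e2 : m * (X * H / x) * (X * H / x) = (m * H ^ 2 * X ^ 2) / x ^ 2 := by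
      field_simp
    rw [e1, e2, div_lt_div_iff_of_pos_right hx2]
    nlinarith [mul_pos hm0 (mul_pos hX0 hX0)]
  nlinarith

lemma gf_strictMono (m : ℝ) (hm : 1 ≤ m) (d : ℕ) (hd1 : 1 ≤ d) (a : ℝ) (ha : 0 < a)
    (x w : ℝ) (hx : 0 < x) (hw0 : 0 < w) (hw1 : w ≤ 1/2)
    (hw2 : 4 * m * w < ((1/2:ℝ) ^ m) ^ 2) :
    StrictMonoOn (gf m d a x) (Icc (x * (1 - w)) x) := by
  have hm0 : 0 < m := lt_of_lt_of_le one_pos hm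
  have hL : x / 2 ≤ x * (1 - w) := by nlinarith
  apply strictMonoOn_of_deriv_pos (convex_Icc _ _)
  · intro s hs
    have hs0 : 0 < s := lt_of_lt_of_le (by linarith) hs.1
    exact (hasDerivAt_gf m d a x s hs0).continuousAt.continuousWithinAt
  · intro s hs
    rw [interior_Icc] at hs
    obtain ⟨hsl, hsu⟩ := hs
    have hs0 : 0 < s := lt_of_le_of_lt (by linarith) hsl
    have hsx : s ≤ x := hsu.le
    have hhalf : x / 2 ≤ s := le_trans hL hsl.le
    rw [(hasDerivAt_gf m d a x s hs0).deriv]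
    have hX0 : 0 < x ^ m := Real.rpow_pos_of_pos hx m
    have hH0 : 0 < ((1:ℝ)/2) ^ m := Real.rpow_pos_of_pos (by norm_num) m
    have hxh : (x/2) ^ m = x ^ m * ((1:ℝ)/2) ^ m := by
      rw [show x/2 = x * (1/2) by ring, Real.mul_rpow hx.le (by norm_num)]
    have hsm_le : s ^ m ≤ x ^ m := Real.rpow_le_rpow hs0.le hsx hm0.le
    have hsm_ge : x ^ m * ((1:ℝ)/2) ^ m ≤ s ^ m := by
      rw [← hxh]; exact Real.rpow_le_rpow (by positivity) hhalf hm0.le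
    have hBer : x ^ m * (1 - m * w) ≤ s ^ m := by
      have h1 : (x * (1 - w)) ^ m = x ^ m * (1 - w) ^ m := Real.mul_rpow hx.le (by linarith)
      have h2 : (1:ℝ) - m * w ≤ (1 - w) ^ m := by
        have := one_add_mul_self_le_rpow_one_add (s := -w) (by linarith) hm
        simpa [sub_eq_add_neg, mul_comm] using this
      calc x ^ m * (1 - m * w) ≤ x ^ m * (1 - w) ^ m := by nlinarith
        _ = (x * (1 - w)) ^ m := h1.symm
        _ ≤ s ^ m := Real.rpow_le_rpow (by nlinarith) hsl.le hm0.le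
    have hP : x ^ m * ((1:ℝ)/2) ^ m / x ≤ s ^ (m - 1) := by
      rw [Real.rpow_sub hs0, Real.rpow_one]
      exact div_le_div₀ (le_trans (by positivity) hsm_ge) hsm_ge hs0 hsx
    have hQ : s ^ (m - 1 - 1) ≤ 4 * x ^ m / x ^ 2 := by
      have e : s ^ (m - 1 - 1) = s ^ m / s ^ (2:ℝ) := by
        rw [← Real.rpow_sub hs0]; congr 1; ring
      rw [e, show s ^ (2:ℝ) = s ^ (2:ℕ) by
        rw [show (2:ℝ) = ((2:ℕ):ℝ) by norm_num, Real.rpow_natCast]]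
      have h1 : (x/2) ^ (2:ℕ) ≤ s ^ (2:ℕ) := by nlinarith
      calc s ^ m / s ^ (2:ℕ) ≤ x ^ m / (x/2) ^ (2:ℕ) :=
            div_le_div₀ hX0.le hsm_le (by positivity) h1
        _ = 4 * x ^ m / x ^ 2 := by rw [div_pow]; field_simp; ring
    have hQ0 : 0 < s ^ (m - 1 - 1) := Real.rpow_pos_of_pos hs0 _
    have hT : 0 ≤ 2 * a * (d : ℝ) * (((d : ℝ) - 1) * s ^ ((d : ℝ) - 1 - 1)) := by
      have hd1' : (1:ℝ) ≤ (d:ℝ) := by exact_mod_cast hd1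
      have h2 : (0:ℝ) < s ^ ((d:ℝ) - 1 - 1) := Real.rpow_pos_of_pos hs0 _
      have : (0:ℝ) ≤ ((d:ℝ) - 1) * s ^ ((d:ℝ) - 1 - 1) := mul_nonneg (by linarith) h2.le
      positivity
    have := key_ineq m w x (x ^ m) (((1:ℝ)/2) ^ m) (s ^ (m-1)) (s ^ (m-1-1)) (s ^ m)
      (2 * a * (d : ℝ) * (((d : ℝ) - 1) * s ^ ((d : ℝ) - 1 - 1)))
      hm hx hw0 hw2 hX0 hH0 hP hQ hQ0 hsm_le hBer hT
    nlinarith [this]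

lemma rpow_one_add_tendsto (q : ℝ) {ρ : ℝ → ℝ} (h : Tendsto ρ atTop (nhds 0)) :
    Tendsto (fun x => (1 + ρ x) ^ q) atTop (nhds 1) := by
  have hc : ContinuousAt (fun t : ℝ => (1 + t) ^ q) 0 := by
    apply ContinuousAt.rpow_const (by fun_prop)
    left; norm_num
  have := hc.tendsto.comp h
  simpa [Function.comp_def] using this

lemma Flim (m : ℝ) (hm : 1 ≤ m) (d : ℕ) (hd1 : 1 ≤ d) (a : ℝ) (ha : 0 < a)
    (ρ : ℝ → ℝ) (hρ0 : Tendsto ρ atTop (nhdsWithin 0 {0}ᶜ)) (K : ℝ)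
    (hρK : Tendsto (fun x => ρ x / (-(a * (d:ℝ) / m ^ 2) * x ^ ((d : ℝ) - 2 * m)))
      atTop (nhds K)) :
    Tendsto (fun x =>
        (m * (1 + ρ x) ^ (m - 1) * ((1 + ρ x) ^ m - 1)
          + a * (d:ℝ) * x ^ ((d : ℝ) - 2 * m) * (1 + ρ x) ^ ((d : ℝ) - 1))
        / (a * (d:ℝ) * x ^ ((d : ℝ) - 2 * m))) atTop (nhds (1 - K)) := by
  have hm0 : 0 < m := lt_of_lt_of_le one_pos hm
  have hd0 : (0:ℝ) < (d:ℝ) := by exact_mod_cast hd1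
  have hρ0' : Tendsto ρ atTop (nhds 0) := hρ0.mono_right nhdsWithin_le_nhds
  have hne : ∀ᶠ x in atTop, ρ x ≠ 0 := hρ0.eventually self_mem_nhdsWithin
  -- limit of the decomposed product
  have t1 : Tendsto (fun x => (m * (1 + ρ x) ^ (m - 1))
      * (((1 + ρ x) ^ m - 1) / ρ x)
      * (ρ x / (-(a * (d:ℝ) / m ^ 2) * x ^ ((d : ℝ) - 2 * m)))
      * (-(a * (d:ℝ) / m ^ 2) / (a * (d:ℝ)))
      + (1 + ρ x) ^ ((d : ℝ) - 1)) atTop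
      (nhds ((m * 1) * m * K * (-(a * (d:ℝ) / m ^ 2) / (a * (d:ℝ))) + 1)) := by
    apply Tendsto.add
    · exact ((((tendsto_const_nhds.mul (rpow_one_add_tendsto (m-1) hρ0')).mul
        ((slope_rpow m).comp hρ0)).mul hρK).mul tendsto_const_nhds)
    · exact rpow_one_add_tendsto _ hρ0'
  have hval : (m * 1) * m * K * (-(a * (d:ℝ) / m ^ 2) / (a * (d:ℝ))) + 1 = 1 - K := by
    field_simp; ring
  rw [hval] at t1
  apply t1.congr'
  filter_upwards [hne, eventually_gt_atTop 0] with x hx hx0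
  have hxp : x ^ ((d : ℝ) - 2 * m) ≠ 0 := (Real.rpow_pos_of_pos hx0 _).ne'
  field_simp

lemma deriv2_ratio (m : ℝ) (hm : 1 ≤ m) (d : ℕ) (a x q : ℝ) (hx : 0 < x) (hq : 0 < q) :
    (2 * m * ((m * (x*q) ^ (m - 1)) * (x*q) ^ (m - 1)
        + ((x*q) ^ m - x ^ m) * ((m - 1) * (x*q) ^ (m - 1 - 1)))
      + 2 * a * (d : ℝ) * (((d : ℝ) - 1) * (x*q) ^ ((d : ℝ) - 1 - 1)))
      / (2 * m ^ 2 * x ^ (2 * m - 2))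
    = q ^ (m-1) * q ^ (m-1) + ((m-1)/m) * (q ^ m - 1) * q ^ (m-1-1)
      + (a * (d:ℝ) * ((d:ℝ) - 1) / m ^ 2) * q ^ ((d:ℝ)-1-1) * x ^ ((d:ℝ) - 2*m) := by
  have hm0 : (0:ℝ) < m := lt_of_lt_of_le one_pos hm
  have hx2 : (0:ℝ) < x ^ (2*m-2) := Real.rpow_pos_of_pos hx _
  have e1 : x ^ (m-1) * x ^ (m-1) = x ^ (2*m-2) := by
    rw [← Real.rpow_add hx]; congr 1; ring
  have e2 : x ^ m * x ^ (m-1-1) = x ^ (2*m-2) := by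
    rw [← Real.rpow_add hx]; congr 1; ring
  have e3 : x ^ ((d:ℝ)-1-1) = x ^ (2*m-2) * x ^ ((d:ℝ) - 2*m) := by
    rw [← Real.rpow_add hx]; congr 1; ring
  have hv : (0:ℝ) < x ^ m := Real.rpow_pos_of_pos hx _
  have e2' : x ^ (m-1-1) = x ^ (m-1) * x ^ (m-1) / x ^ m := by
    rw [← Real.rpow_add hx, ← Real.rpow_sub hx]; congr 1; ring
  have e1' : x ^ (2*m-2) = x ^ (m-1) * x ^ (m-1) := e1.symm
  simp only [Real.mul_rpow hx.le hq.le, e3, e1', e2']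
  have hu : (0:ℝ) < x ^ (m-1) := Real.rpow_pos_of_pos hx _
  field_simp

lemma hAux_ratio (m : ℝ) (hm : 1 ≤ m) (d : ℕ) (hd1 : 1 ≤ d) (a : ℝ) (ha : 0 < a)
    (x r : ℝ) (hx : 0 < x) (hr : 0 < r) (hne : r / x - 1 ≠ 0)
    (hgf : gf m d a x r = 0) :
    -(hAux m d a x r) / ((a ^ 2 * (d : ℝ) ^ 2 / m ^ 2) * x ^ (2 * (d : ℝ) - 2 * m))
      = (2 / (d : ℝ)) * ((r / x - 1) / (-(a * (d : ℝ) / m ^ 2) * x ^ ((d : ℝ) - 2 * m)))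
          * (((r / x) ^ (d:ℝ) - 1) / (r / x - 1)) - (r / x) ^ (2 * (d : ℝ) - 2 * m) := by
  have hm0 : (0:ℝ) < m := lt_of_lt_of_le one_pos hm
  have hd0 : (0:ℝ) < (d:ℝ) := by exact_mod_cast hd1
  have hq : 0 < r / x := div_pos hr hx
  have hrm1 : (0:ℝ) < r ^ (m - 1) := Real.rpow_pos_of_pos hr _
  -- solve the critical point equation
  have key : r ^ m - x ^ m = -(a * (d:ℝ) / m) * r ^ ((d:ℝ) - m) := by
    have e : r ^ ((d:ℝ) - m) = r ^ ((d:ℝ) - 1) / r ^ (m - 1) := by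
      rw [← Real.rpow_sub hr]; congr 1; ring
    rw [e]
    simp only [gf] at hgf
    field_simp
    linarith [hgf]
  -- rewrite hAux
  have hval : -(hAux m d a x r) =
      2 * a * (x ^ (d:ℝ) - r ^ (d:ℝ)) - (a * (d:ℝ) / m) ^ 2 * (r ^ ((d:ℝ) - m)) ^ 2 := by
    simp only [hAux, key]; ring
  -- power identities
  have hxr : x * (r / x) = r := by field_simp
  have pgen : ∀ t : ℝ, r ^ t = x ^ t * (r/x) ^ t := fun t => by
    rw [← Real.mul_rpow hx.le hq.le, hxr]
  have p1 : r ^ (d:ℝ) = x ^ (d:ℝ) * (r/x) ^ (d:ℝ) := pgen _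
  have p2 : (r ^ ((d:ℝ) - m)) ^ 2 = x ^ (2*(d:ℝ) - 2*m) * (r/x) ^ (2*(d:ℝ) - 2*m) := by
    have e : (r ^ ((d:ℝ) - m)) ^ 2 = r ^ (2*(d:ℝ) - 2*m) := by
      rw [sq, ← Real.rpow_add hr]; congr 1; ring
    rw [e, pgen]
  have p3 : x ^ (2*(d:ℝ) - 2*m) = x ^ (d:ℝ) * x ^ ((d:ℝ) - 2*m) := by
    rw [← Real.rpow_add hx]; congr 1; ring
  have hX1 : (0:ℝ) < x ^ (d:ℝ) := Real.rpow_pos_of_pos hx _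
  have hX2 : (0:ℝ) < x ^ ((d:ℝ) - 2*m) := Real.rpow_pos_of_pos hx _
  rw [hval, p1, p2, p3]
  set Q1 := (r/x) ^ (d:ℝ) with hQ1
  set Q2 := (r/x) ^ (2*(d:ℝ) - 2*m) with hQ2
  set X1 := x ^ (d:ℝ) with hX1d
  set X2 := x ^ ((d:ℝ) - 2*m) with hX2d
  have hne' : r - x ≠ 0 := by
    intro h
    exact hne (by rw [show r/x - 1 = (r-x)/x by field_simp, h, zero_div])
  field_simp [hne']
  ring

lemma tendsto_rpow_zero' {e : ℝ} (he : e < 0) :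
    Tendsto (fun x : ℝ => x ^ e) atTop (nhds 0) := by
  simpa using tendsto_rpow_neg_atTop (neg_pos.mpr he)

lemma gf_sign (m : ℝ) (hm : 1 ≤ m) (d : ℕ) (hd1 : 1 ≤ d) (hd2 : (d:ℝ) < 2*m)
    (a : ℝ) (ha : 0 < a) (k : ℝ) (hk : k ≠ 0) :
    Tendsto (fun x => gf m d a x (x * (1 - a * ↑d / m ^ 2 * k * x ^ ((d:ℝ) - 2 * m)))
      / (2 * x ^ (2*m - 1) * (a * ↑d * x ^ ((d:ℝ) - 2*m)))) atTop (nhds (1 - k)) := by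
  have hm0 : (0:ℝ) < m := lt_of_lt_of_le one_pos hm
  have hd0 : (0:ℝ) < (d:ℝ) := by exact_mod_cast hd1
  have hc0 : (0:ℝ) < a * (d:ℝ) / m ^ 2 := by positivity
  have hp : (d:ℝ) - 2*m < 0 := by linarith
  set ρ : ℝ → ℝ := fun x => -(a * ↑d / m ^ 2 * k * x ^ ((d:ℝ) - 2 * m)) with hρdef
  have hρtend : Tendsto ρ atTop (nhds 0) := by
    have := (tendsto_rpow_zero' hp).const_mul (-(a * ↑d / m ^ 2 * k))
    simpa [hρdef, neg_mul, mul_assoc] using this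
  have hρ0 : Tendsto ρ atTop (nhdsWithin 0 {0}ᶜ) := by
    rw [tendsto_nhdsWithin_iff]
    refine ⟨hρtend, ?_⟩
    filter_upwards [eventually_gt_atTop 0] with x hx
    have : x ^ ((d:ℝ) - 2 * m) > 0 := Real.rpow_pos_of_pos hx _
    simp only [hρdef, Set.mem_compl_iff, Set.mem_singleton_iff, neg_eq_zero]
    exact mul_ne_zero (mul_ne_zero hc0.ne' hk) this.ne'
  have hρK : Tendsto (fun x => ρ x / (-(a * (d:ℝ) / m ^ 2) * x ^ ((d : ℝ) - 2 * m)))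
      atTop (nhds k) := by
    apply tendsto_const_nhds.congr'
    filter_upwards [eventually_gt_atTop 0] with x hx
    have ht : (0:ℝ) < x ^ ((d:ℝ) - 2 * m) := Real.rpow_pos_of_pos hx _
    simp only [hρdef]
    field_simp
  apply (Flim m hm d hd1 a ha ρ hρ0 k hρK).congr'
  filter_upwards [eventually_gt_atTop 0, hρtend.eventually_const_lt (by norm_num : (-1:ℝ) < 0)]
    with x hx hρx
  have harg : x * (1 - a * ↑d / m ^ 2 * k * x ^ ((d:ℝ) - 2 * m)) = x * (1 + ρ x) := by
    simp only [hρdef]; ring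
  rw [harg, gf_factor m d a x (ρ x) hx hρx]
  have h2 : (2 * x ^ (2*m-1)) ≠ 0 := by
    have := Real.rpow_pos_of_pos hx (2*m-1); positivity
  rw [show 2 * x ^ (2*m-1) * (m * (1 + ρ x) ^ (m - 1) * ((1 + ρ x) ^ m - 1)
      + a * (d:ℝ) * x ^ ((d : ℝ) - 2 * m) * (1 + ρ x) ^ ((d : ℝ) - 1))
      / (2 * x ^ (2*m - 1) * (a * ↑d * x ^ ((d:ℝ) - 2*m)))
    = (m * (1 + ρ x) ^ (m - 1) * ((1 + ρ x) ^ m - 1)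
      + a * (d:ℝ) * x ^ ((d : ℝ) - 2 * m) * (1 + ρ x) ^ ((d : ℝ) - 1))
      / (a * ↑d * x ^ ((d:ℝ) - 2*m)) from mul_div_mul_left _ _ h2]
lemma gf_neg (m : ℝ) (hm : 1 ≤ m) (d : ℕ) (hd1 : 1 ≤ d) (hd2 : (d:ℝ) < 2*m)
    (a : ℝ) (ha : 0 < a) (k : ℝ) (hk1 : 1 < k) :
    ∀ᶠ x in atTop, gf m d a x (x * (1 - a * ↑d / m ^ 2 * k * x ^ ((d:ℝ) - 2 * m))) < 0 := by
  have h := (gf_sign m hm d hd1 hd2 a ha k (by linarith)).eventually_lt_const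
    (by linarith : 1 - k < 0)
  filter_upwards [h, eventually_gt_atTop 0] with x hx hx0
  have hd0 : (0:ℝ) < (d:ℝ) := by exact_mod_cast hd1
  have h1 := Real.rpow_pos_of_pos hx0 (2*m-1)
  have h2 := Real.rpow_pos_of_pos hx0 ((d:ℝ)-2*m)
  have hden : 0 < 2 * x ^ (2*m - 1) * (a * ↑d * x ^ ((d:ℝ) - 2*m)) := by positivity
  rcases div_neg_iff.mp hx with ⟨_, h4⟩ | ⟨h3, _⟩
  · linarith
  · exact h3

lemma gf_pos (m : ℝ) (hm : 1 ≤ m) (d : ℕ) (hd1 : 1 ≤ d) (hd2 : (d:ℝ) < 2*m)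
    (a : ℝ) (ha : 0 < a) (k : ℝ) (hk0 : 0 < k) (hk1 : k < 1) :
    ∀ᶠ x in atTop, 0 < gf m d a x (x * (1 - a * ↑d / m ^ 2 * k * x ^ ((d:ℝ) - 2 * m))) := by
  have h := (gf_sign m hm d hd1 hd2 a ha k (by linarith)).eventually_const_lt
    (by linarith : (0:ℝ) < 1 - k)
  filter_upwards [h, eventually_gt_atTop 0] with x hx hx0
  have hd0 : (0:ℝ) < (d:ℝ) := by exact_mod_cast hd1
  have h1 := Real.rpow_pos_of_pos hx0 (2*m-1)
  have h2 := Real.rpow_pos_of_pos hx0 ((d:ℝ)-2*m)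
  have hden : 0 < 2 * x ^ (2*m - 1) * (a * ↑d * x ^ ((d:ℝ) - 2*m)) := by positivity
  rcases div_pos_iff.mp hx with ⟨h3, _⟩ | ⟨_, h4⟩
  · exact h3
  · linarith

/-- the interval endpoint `x (1 - c k x^{d-2m})` -/
noncomputable def lEnd (m : ℝ) (d : ℕ) (a k x : ℝ) : ℝ :=
  x * (1 - a * ↑d / m ^ 2 * k * x ^ ((d:ℝ) - 2 * m))

open Classical in
/-- the critical point, selected by choice from the IVT interval -/
noncomputable def rr (m : ℝ) (d : ℕ) (a x : ℝ) : ℝ :=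
  if h : ∃ s, s ∈ Set.Icc (lEnd m d a (3/2) x) (lEnd m d a (1/2) x) ∧ gf m d a x s = 0
  then h.choose else 1

/-- pointwise location facts for the endpoints -/
lemma lEnd_mem (m : ℝ) (hm : 1 ≤ m) (d : ℕ) (hd1 : 1 ≤ d) (a : ℝ) (ha : 0 < a)
    (x k : ℝ) (hx : 0 < x) (hk0 : 0 ≤ k) (hk32 : k ≤ 3/2)
    (hE1 : x ^ (((d:ℝ) - 2*m)/2) ≤ 1/2)
    (hE3 : a * ↑d / m ^ 2 * (3/2) * x ^ (((d:ℝ) - 2*m)/2) ≤ 1) :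
    x * (1 - x ^ (((d:ℝ) - 2*m)/2)) ≤ lEnd m d a k x ∧ lEnd m d a k x ≤ x
      ∧ x/2 ≤ lEnd m d a k x := by
  have hm0 : (0:ℝ) < m := lt_of_lt_of_le one_pos hm
  have hd0 : (0:ℝ) < (d:ℝ) := by exact_mod_cast hd1
  have hc0 : (0:ℝ) < a * (d:ℝ) / m ^ 2 := by positivity
  have hw0 : (0:ℝ) < x ^ (((d:ℝ) - 2*m)/2) := Real.rpow_pos_of_pos hx _
  have hsq : x ^ ((d:ℝ) - 2*m) = x ^ (((d:ℝ) - 2*m)/2) * x ^ (((d:ℝ) - 2*m)/2) := by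
    rw [← Real.rpow_add hx]; congr 1; ring
  have ht0 : (0:ℝ) < x ^ ((d:ℝ) - 2*m) := Real.rpow_pos_of_pos hx _
  set w := x ^ (((d:ℝ) - 2*m)/2)
  set c := a * (d:ℝ) / m ^ 2
  have hb : c * k * x ^ ((d:ℝ) - 2*m) ≤ w := by
    rw [hsq]
    have h1 : (0:ℝ) ≤ (3/2 - k) * c * (w*w) :=
      mul_nonneg (mul_nonneg (by linarith) hc0.le) (mul_nonneg hw0.le hw0.le)
    have h2 : c * (3/2) * w * w ≤ 1 * w := mul_le_mul_of_nonneg_right hE3 hw0.le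
    nlinarith
  refine ⟨?_, ?_, ?_⟩
  · simp only [lEnd]; nlinarith [mul_le_mul_of_nonneg_left hb hx.le]
  · simp only [lEnd]
    nlinarith [mul_nonneg hx.le (mul_nonneg (mul_nonneg hc0.le hk0) ht0.le)]
  · simp only [lEnd]; nlinarith [mul_le_mul_of_nonneg_left (le_trans hb hE1) hx.le]
lemma rr_root (m : ℝ) (hm : 1 ≤ m) (d : ℕ) (hd1 : 1 ≤ d) (hd2 : (d:ℝ) < 2*m)
    (a : ℝ) (ha : 0 < a) :
    ∀ᶠ x in atTop, 0 < rr m d a x ∧ rr m d a x < x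
      ∧ rr m d a x ∈ Set.Icc (lEnd m d a (3/2) x) (lEnd m d a (1/2) x)
      ∧ gf m d a x (rr m d a x) = 0 := by
  have hm0 : (0:ℝ) < m := lt_of_lt_of_le one_pos hm
  have hd0 : (0:ℝ) < (d:ℝ) := by exact_mod_cast hd1
  have hc0 : (0:ℝ) < a * (d:ℝ) / m ^ 2 := by positivity
  have hp2 : ((d:ℝ) - 2*m)/2 < 0 := by linarith
  have hW := tendsto_rpow_zero' hp2
  have hE1 : ∀ᶠ x:ℝ in atTop, x ^ (((d:ℝ)-2*m)/2) ≤ 1/2 :=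
    (hW.eventually_lt_const (by norm_num : (0:ℝ) < 1/2)).mono fun x h => h.le
  have hE3 : ∀ᶠ x:ℝ in atTop, a*(d:ℝ)/m^2*(3/2)*x ^ (((d:ℝ)-2*m)/2) ≤ 1 := by
    have h4 : Tendsto (fun x:ℝ => a*(d:ℝ)/m^2*(3/2)*x ^ (((d:ℝ)-2*m)/2)) atTop (nhds 0) := by
      simpa using hW.const_mul (a*(d:ℝ)/m^2*(3/2))
    exact (h4.eventually_lt_const one_pos).mono fun x h => h.le
  filter_upwards [hE1, hE3, gf_neg m hm d hd1 hd2 a ha (3/2) (by norm_num),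
    gf_pos m hm d hd1 hd2 a ha (1/2) (by norm_num) (by norm_num), eventually_gt_atTop 0]
    with x h1 h3 hneg hpos hx0
  have hm32 := lEnd_mem m hm d hd1 a ha x (3/2) hx0 (by norm_num) (by norm_num) h1 h3
  have hm12 := lEnd_mem m hm d hd1 a ha x (1/2) hx0 (by norm_num) (by norm_num) h1 h3
  have ht0 : (0:ℝ) < x ^ ((d:ℝ)-2*m) := Real.rpow_pos_of_pos hx0 _
  have horder : lEnd m d a (3/2) x ≤ lEnd m d a (1/2) x := by
    simp only [lEnd]; nlinarith [mul_nonneg hx0.le (mul_pos hc0 ht0).le]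
  have hcont : ContinuousOn (gf m d a x)
      (Icc (lEnd m d a (3/2) x) (lEnd m d a (1/2) x)) := by
    intro s hs
    have hs0 : 0 < s := lt_of_lt_of_le (by linarith [hm32.2.2]) hs.1
    exact (hasDerivAt_gf m d a x s hs0).continuousAt.continuousWithinAt
  have hIV := intermediate_value_Icc horder hcont
  have h0mem : (0:ℝ) ∈ Icc (gf m d a x (lEnd m d a (3/2) x))
      (gf m d a x (lEnd m d a (1/2) x)) := by
    constructor
    · simp only [lEnd]; exact hneg.le
    · simp only [lEnd]; exact hpos.le
  obtain ⟨s, hsmem, hs0⟩ := hIV h0mem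
  have hex : ∃ s, s ∈ Icc (lEnd m d a (3/2) x) (lEnd m d a (1/2) x)
      ∧ gf m d a x s = 0 := ⟨s, hsmem, hs0⟩
  have hrr : rr m d a x = hex.choose := by simp only [rr]; rw [dif_pos hex]
  obtain ⟨hmem', hzero⟩ := hex.choose_spec
  rw [hrr]
  refine ⟨?_, ?_, hmem', hzero⟩
  · exact lt_of_lt_of_le (by linarith [hm32.2.2]) hmem'.1
  · have hlt : lEnd m d a (1/2) x < x := by
      simp only [lEnd]; nlinarith [mul_pos hx0 (mul_pos hc0 ht0)]
    exact lt_of_le_of_lt hmem'.2 hlt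

lemma rr_loc (m : ℝ) (hm : 1 ≤ m) (d : ℕ) (hd1 : 1 ≤ d) (hd2 : (d:ℝ) < 2*m)
    (a : ℝ) (ha : 0 < a) (ε : ℝ) (hε0 : 0 < ε) (hε2 : ε ≤ 1/2) :
    ∀ᶠ x in atTop, lEnd m d a (1+ε) x ≤ rr m d a x
      ∧ rr m d a x ≤ lEnd m d a (1-ε) x := by
  have hm0 : (0:ℝ) < m := lt_of_lt_of_le one_pos hm
  have hd0 : (0:ℝ) < (d:ℝ) := by exact_mod_cast hd1
  have hc0 : (0:ℝ) < a * (d:ℝ) / m ^ 2 := by positivity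
  have hp2 : ((d:ℝ) - 2*m)/2 < 0 := by linarith
  have hW := tendsto_rpow_zero' hp2
  have hE1 : ∀ᶠ x:ℝ in atTop, x ^ (((d:ℝ)-2*m)/2) ≤ 1/2 :=
    (hW.eventually_lt_const (by norm_num : (0:ℝ) < 1/2)).mono fun x h => h.le
  have hE2 : ∀ᶠ x:ℝ in atTop, 4*m*x ^ (((d:ℝ)-2*m)/2) < ((1/2:ℝ)^m)^2 := by
    have h4 : Tendsto (fun x:ℝ => 4*m*x ^ (((d:ℝ)-2*m)/2)) atTop (nhds 0) := by
      simpa using hW.const_mul (4*m)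
    have hpos : (0:ℝ) < ((1/2:ℝ)^m)^2 := by
      have := Real.rpow_pos_of_pos (by norm_num : (0:ℝ) < 1/2) m; positivity
    exact h4.eventually_lt_const hpos
  have hE3 : ∀ᶠ x:ℝ in atTop, a*(d:ℝ)/m^2*(3/2)*x ^ (((d:ℝ)-2*m)/2) ≤ 1 := by
    have h4 : Tendsto (fun x:ℝ => a*(d:ℝ)/m^2*(3/2)*x ^ (((d:ℝ)-2*m)/2)) atTop (nhds 0) := by
      simpa using hW.const_mul (a*(d:ℝ)/m^2*(3/2))
    exact (h4.eventually_lt_const one_pos).mono fun x h => h.le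
  filter_upwards [rr_root m hm d hd1 hd2 a ha,
    gf_neg m hm d hd1 hd2 a ha (1+ε) (by linarith),
    gf_pos m hm d hd1 hd2 a ha (1-ε) (by linarith) (by linarith),
    hE1, hE2, hE3, eventually_gt_atTop 0] with x hroot hneg hpos h1 h2 h3 hx0
  have hw0 : (0:ℝ) < x ^ (((d:ℝ)-2*m)/2) := Real.rpow_pos_of_pos hx0 _
  have hmono := gf_strictMono m hm d hd1 a ha x _ hx0 hw0 h1 h2
  have hm32 := lEnd_mem m hm d hd1 a ha x (3/2) hx0 (by norm_num) (by norm_num) h1 h3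
  have hm12 := lEnd_mem m hm d hd1 a ha x (1/2) hx0 (by norm_num) (by norm_num) h1 h3
  have hm1p := lEnd_mem m hm d hd1 a ha x (1+ε) hx0 (by linarith) (by linarith) h1 h3
  have hm1m := lEnd_mem m hm d hd1 a ha x (1-ε) hx0 (by linarith) (by linarith) h1 h3
  have hKrr : rr m d a x ∈ Icc (x*(1 - x ^ (((d:ℝ)-2*m)/2))) x :=
    ⟨le_trans hm32.1 hroot.2.2.1.1, le_trans hroot.2.2.1.2 hm12.2.1⟩
  have hK1p : lEnd m d a (1+ε) x ∈ Icc (x*(1 - x ^ (((d:ℝ)-2*m)/2))) x := ⟨hm1p.1, hm1p.2.1⟩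
  have hK1m : lEnd m d a (1-ε) x ∈ Icc (x*(1 - x ^ (((d:ℝ)-2*m)/2))) x := ⟨hm1m.1, hm1m.2.1⟩
  constructor
  · by_contra hcon
    push_neg at hcon
    have hlt := hmono hKrr hK1p hcon
    rw [hroot.2.2.2] at hlt
    have hneg' : gf m d a x (lEnd m d a (1+ε) x) < 0 := by simp only [lEnd]; exact hneg
    linarith
  · by_contra hcon
    push_neg at hcon
    have hlt := hmono hK1m hKrr hcon
    rw [hroot.2.2.2] at hlt
    have hpos' : 0 < gf m d a x (lEnd m d a (1-ε) x) := by simp only [lEnd]; exact hpos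
    linarith
lemma q_rpow_tendsto (t : ℝ) {f : ℝ → ℝ} (hf : Tendsto f atTop (nhds 1)) :
    Tendsto (fun x => f x ^ t) atTop (nhds 1) := by
  have hc : ContinuousAt (fun s : ℝ => s ^ t) 1 :=
    Real.continuousAt_rpow_const 1 t (Or.inl one_ne_zero)
  have := hc.tendsto.comp hf
  simpa [Real.one_rpow, Function.comp_def] using this

/-- Case `1 ≤ d < 2m`: the function `h_x` has a critical point `r_x = x(1 + ρ_x)` with
`ρ_x ~ -(ad/m²) x^{d-2m}`, and there `h_x''(r_x) ~ 2m² x^{2m-2}` and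
`-h_x(r_x) ~ (a²d²/m²) x^{2d-2m}` as `x → ∞`. -/
theorem critical_point_asymptotics_d_lt_2m (m : ℝ) (hm : 1 ≤ m) (d : ℕ) (hd1 : 1 ≤ d)
    (hd2 : (d : ℝ) < 2 * m) (a : ℝ) (ha : 0 < a) :
    ∃ r : ℝ → ℝ,
      (∀ᶠ x in atTop, 0 < r x ∧ deriv (fun s => hAux m d a x s) (r x) = 0) ∧
      Tendsto (fun x => (r x / x - 1) / (-(a * (d : ℝ) / m ^ 2) * x ^ ((d : ℝ) - 2 * m)))
        atTop (nhds 1) ∧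
      Tendsto (fun x => deriv (deriv (fun s => hAux m d a x s)) (r x) /
        (2 * m ^ 2 * x ^ (2 * m - 2))) atTop (nhds 1) ∧
      Tendsto (fun x => (-(hAux m d a x (r x))) /
        ((a ^ 2 * (d : ℝ) ^ 2 / m ^ 2) * x ^ (2 * (d : ℝ) - 2 * m))) atTop (nhds 1) := by
  have hm0 : (0:ℝ) < m := lt_of_lt_of_le one_pos hm
  have hd0 : (0:ℝ) < (d:ℝ) := by exact_mod_cast hd1
  have hc0 : (0:ℝ) < a * (d:ℝ) / m ^ 2 := by positivity
  have hp : (d:ℝ) - 2*m < 0 := by linarith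
  have hxp : Tendsto (fun x:ℝ => x ^ ((d:ℝ)-2*m)) atTop (nhds 0) := tendsto_rpow_zero' hp
  have hroot := rr_root m hm d hd1 hd2 a ha
  have hEx : ∀ᶠ x:ℝ in atTop, (0:ℝ) < x := eventually_gt_atTop 0
  -- bullet 2 : the localization limit
  have hu : Tendsto (fun x => (rr m d a x / x - 1) /
      (-(a * (d:ℝ) / m ^ 2) * x ^ ((d:ℝ) - 2 * m))) atTop (nhds 1) := by
    rw [Metric.tendsto_nhds]
    intro ε hε
    have hε'0 : 0 < min (ε/2) (1/2) := lt_min (by linarith) (by norm_num)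
    filter_upwards [rr_loc m hm d hd1 hd2 a ha (min (ε/2) (1/2)) hε'0 (min_le_right _ _),
      hEx] with x hx1 hx0
    set ε' := min (ε/2) (1/2) with hε'def
    obtain ⟨hl, hr⟩ := hx1
    simp only [lEnd] at hl hr
    have ht0 : (0:ℝ) < x ^ ((d:ℝ) - 2*m) := Real.rpow_pos_of_pos hx0 _
    set t := x ^ ((d:ℝ) - 2*m) with htdef
    set c := a * (d:ℝ) / m ^ 2 with hcdef
    have hden : -c * t < 0 := by nlinarith [mul_pos hc0 ht0]
    have h1 : 1 - c*(1+ε')*t ≤ rr m d a x / x := by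
      rw [le_div_iff₀ hx0]; nlinarith
    have h2 : rr m d a x / x ≤ 1 - c*(1-ε')*t := by
      rw [div_le_iff₀ hx0]; nlinarith
    have hub : (rr m d a x / x - 1) / (-c * t) ≤ 1 + ε' := by
      rw [div_le_iff_of_neg hden]; nlinarith
    have hlb : 1 - ε' ≤ (rr m d a x / x - 1) / (-c * t) := by
      rw [le_div_iff_of_neg hden]; nlinarith
    rw [Real.dist_eq, abs_lt]
    have hε'2 : ε' ≤ ε/2 := min_le_left _ _
    constructor
    · linarith
    · linarith
  -- the ratio rr/x tends to 1
  have hρ0 : Tendsto (fun x => rr m d a x / x - 1) atTop (nhds 0) := by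
    have h2 : Tendsto (fun x:ℝ => -(a * (d:ℝ) / m ^ 2) * x ^ ((d:ℝ)-2*m)) atTop (nhds 0) := by
      simpa using hxp.const_mul (-(a * (d:ℝ) / m ^ 2))
    have hmul := hu.mul h2
    rw [show (1:ℝ) * 0 = 0 by ring] at hmul
    apply hmul.congr'
    filter_upwards [hEx] with x hx0
    have ht0 : (0:ℝ) < x ^ ((d:ℝ)-2*m) := Real.rpow_pos_of_pos hx0 _
    have hne : -(a * (d:ℝ) / m ^ 2) * x ^ ((d:ℝ)-2*m) ≠ 0 := by
      intro h; nlinarith [mul_pos hc0 ht0]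
    field_simp
  have hq : Tendsto (fun x => rr m d a x / x) atTop (nhds 1) := by
    have := hρ0.add (tendsto_const_nhds : Tendsto (fun _ : ℝ => (1:ℝ)) atTop (nhds 1))
    simpa using this
  have hρne : Tendsto (fun x => rr m d a x / x - 1) atTop (nhdsWithin 0 {0}ᶜ) := by
    rw [tendsto_nhdsWithin_iff]
    refine ⟨hρ0, ?_⟩
    filter_upwards [hroot, hEx] with x hx hx0
    have hlt : rr m d a x / x < 1 := (div_lt_one hx0).mpr hx.2.1
    simp only [Set.mem_compl_iff, Set.mem_singleton_iff]
    exact sub_ne_zero.mpr (ne_of_lt hlt)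
  refine ⟨rr m d a, ?_, hu, ?_, ?_⟩
  · filter_upwards [hroot] with x hx
    exact ⟨hx.1, by rw [deriv_hAux m d a x _ hx.1]; exact hx.2.2.2⟩
  · -- second derivative asymptotics
    have hlim : Tendsto (fun x => (rr m d a x / x) ^ (m-1) * (rr m d a x / x) ^ (m-1)
        + ((m-1)/m) * ((rr m d a x / x) ^ m - 1) * (rr m d a x / x) ^ (m-1-1)
        + (a * (d:ℝ) * ((d:ℝ) - 1) / m ^ 2) * (rr m d a x / x) ^ ((d:ℝ)-1-1)
            * x ^ ((d:ℝ) - 2*m))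
        atTop (nhds (1*1 + ((m-1)/m) * (1-1) * 1 + (a*(d:ℝ)*((d:ℝ)-1)/m^2) * 1 * 0)) := by
      apply Tendsto.add
      apply Tendsto.add
      · exact (q_rpow_tendsto (m-1) hq).mul (q_rpow_tendsto (m-1) hq)
      · exact (tendsto_const_nhds.mul ((q_rpow_tendsto m hq).sub tendsto_const_nhds)).mul
          (q_rpow_tendsto (m-1-1) hq)
      · exact (tendsto_const_nhds.mul (q_rpow_tendsto ((d:ℝ)-1-1) hq)).mul hxp
    rw [show (1*1 + ((m-1)/m) * ((1:ℝ)-1) * 1 + (a*(d:ℝ)*((d:ℝ)-1)/m^2) * 1 * 0 : ℝ) = 1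
      by ring] at hlim
    apply hlim.congr'
    filter_upwards [hroot, hEx] with x hx hx0
    have hr0 := hx.1
    have hq0 : 0 < rr m d a x / x := div_pos hr0 hx0
    rw [deriv2_hAux m d a x _ hr0]
    set q := rr m d a x / x with hqdef
    have hxr : x * q = rr m d a x := by rw [hqdef]; field_simp
    rw [← hxr]
    exact (deriv2_ratio m hm d a x q hx0 hq0).symm
  · -- value asymptotics
    have hψ : Tendsto (fun x => ((rr m d a x / x) ^ (d:ℝ) - 1)/(rr m d a x / x - 1))
        atTop (nhds (d:ℝ)) := by
      have := (slope_rpow (d:ℝ)).comp hρne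
      apply this.congr
      intro x
      simp only [Function.comp]
      rw [show 1 + (rr m d a x / x - 1) = rr m d a x / x by ring]
    have hQ2 : Tendsto (fun x => (rr m d a x / x) ^ (2*(d:ℝ) - 2*m)) atTop (nhds 1) :=
      q_rpow_tendsto _ hq
    have hlim : Tendsto (fun x => (2/(d:ℝ)) *
        ((rr m d a x / x - 1) / (-(a * (d:ℝ) / m ^ 2) * x ^ ((d:ℝ) - 2 * m)))
        * (((rr m d a x / x) ^ (d:ℝ) - 1)/(rr m d a x / x - 1))
        - (rr m d a x / x) ^ (2*(d:ℝ) - 2*m)) atTop (nhds ((2/(d:ℝ)) * 1 * (d:ℝ) - 1)) :=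
      ((tendsto_const_nhds.mul hu).mul hψ).sub hQ2
    rw [show (2/(d:ℝ)) * 1 * (d:ℝ) - 1 = 1 by field_simp; norm_num] at hlim
    apply hlim.congr'
    filter_upwards [hroot, hEx] with x hx hx0
    have hne : rr m d a x / x - 1 ≠ 0 :=
      sub_ne_zero.mpr (ne_of_lt ((div_lt_one hx0).mpr hx.2.1))
    exact (hAux_ratio m hm d hd1 a ha x (rr m d a x) hx0 hx.1 hne hx.2.2.2).symm
end
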